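/- arXiv:2512.23285 — 8 statements merged into one kernel-verified Lean document; each statement's English description precedes it below -/
import Mathlib

section
/- For every 0 ≤ m ≤ ⌊n/2⌋, every standard Young tableau Q of shape (n−m,m), and every 0 ≤ ℓ ≤ n−2m: ⟨f_Q^{m,ℓ}, f_Q^{m,ℓ}⟩_π = γ_Q · ⟨f_T^{m,ℓ}, f_T^{m,ℓ}⟩_π = γ_Q · (2^m/(n+1)) · Σ_{i=0}^{n−2m} (T_{m,n}^{(ℓ)}(i))² · C(n−2m,i)/C(n,m+i), where T is the column reading tableau. -/
/-!
`f_T^{m,ℓ}` is a simultaneous eigenvector of the Jucys–Murphy elements `M_u = Σ_{i<u} (i u)`,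
the eigenvalue of `M_u` being the content of the box holding `u` in the column reading tableau
`T`: in `M_u g_T^{m,i}` every pair `{2s - 1, 2s}` below `u` contributes `g_T^{m,i}`, the partner
`2r - 1` of `u = 2r` contributes `-g_T^{m,i}`, and every entry beyond `2m` contributes `g_T^{m,i}`.

If `g` is such an eigenvector and the contents of `t` and `t + 1` differ by `d ≠ 0`, the relation
`M_{t+1} s_t = s_t M_t + 1` and the self-adjointness of `M_t` and `s_t` for `⟨·,·⟩_π` give
`⟨g, s_t g⟩_π = ⟨g, g⟩_π / d`. Hence `(s_t - 1/d) g` has squared norm `(1 - 1/d²) ⟨g, g⟩_π`, and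
it is again an eigenvector, with the contents of `t` and `t + 1` exchanged (Young's seminormal
form). Each factor of `τ_Q` moves one entry of the second row one step to the right, and the
`j`-th factor of `τ_Q^{(r)}` has `d = j + 1`; this produces `γ_Q`.

Finally `f_T^{m,ℓ} = Σ_i T(i) g_T^{m,i}`, the `g_T^{m,i}` have disjoint supports, and
`g_T^{m,i}` is `±1` exactly on the `2^m C(n-2m, i)` sets of size `m + i` with one element in each
pair `{2r - 1, 2r}`, `r ≤ m`, and `i` elements beyond `2m`.
-/

open Finset

attribute [local instance] Classical.propDecidable

/-- Stationary distribution of the binary Burnside process. -/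
noncomputable def piDist (n : ℕ) (U : Finset ℕ) : ℝ :=
  1 / ((n + 1) * (n.choose U.card))

/-- Binary Burnside transition matrix entry. -/
noncomputable def Kmat (n : ℕ) (x y : Finset ℕ) : ℝ :=
  (((2 * (n - (x ∪ y).card)).choose (n - (x ∪ y).card) : ℝ) *
      ((2 * ((y \ x).card)).choose ((y \ x).card)) *
      ((2 * ((x \ y).card)).choose ((x \ y).card)) *
      ((2 * ((x ∩ y).card)).choose ((x ∩ y).card))) /
    (4 ^ n * (((n - (x ∪ y).card) + (y \ x).card).choose (n - (x ∪ y).card)) *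
      (((x \ y).card + (x ∩ y).card).choose ((x \ y).card)))

/-- Action of K_n on functions. -/
noncomputable def Kop (n : ℕ) (f : Finset ℕ → ℝ) : Finset ℕ → ℝ :=
  fun x => ∑ y ∈ (Finset.Icc 1 n).powerset, Kmat n x y * f y

/-- s-step transition probabilities. -/
noncomputable def Kpow (n : ℕ) : ℕ → Finset ℕ → Finset ℕ → ℝ
  | 0 => fun x y => if x = y then 1 else 0
  | s + 1 => fun x y => ∑ z ∈ (Finset.Icc 1 n).powerset, Kmat n x z * Kpow n s z y

/-- Chi-square distance to stationarity after s steps, started at x. -/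
noncomputable def chiSq (n s : ℕ) (x : Finset ℕ) : ℝ :=
  ∑ y ∈ (Finset.Icc 1 n).powerset, (Kpow n s x y - piDist n y) ^ 2 / piDist n y

/-- Eigenvalues. -/
noncomputable def betaEV (k : ℕ) : ℝ := (((2 * k).choose k : ℝ)) ^ 2 / 16 ^ k

/-- The eigenvectors f_S of Diaconis–Lin–Ram. -/
noncomputable def fSvec (S : Finset ℕ) : Finset ℕ → ℝ :=
  fun U => (-1 : ℝ) ^ ((S ∩ U).card) * (S.card.choose ((S ∩ U).card))

/-- Inner product with respect to π. -/
noncomputable def innerPi (n : ℕ) (f g : Finset ℕ → ℝ) : ℝ :=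
  ∑ U ∈ (Finset.Icc 1 n).powerset, f U * g U * piDist n U

/-- The scalars T_{m,n}^{(ℓ)}(i). -/
noncomputable def Tcoef (n m ℓ i : ℕ) : ℝ :=
  ∑ j ∈ Finset.range (i + 1),
    if j ≤ ℓ then
      (-1 : ℝ) ^ (m + j) * ((2 * m + ℓ).choose (m + j)) * (i.choose j) *
        ((n - 2 * m - i).choose (ℓ - j))
    else 0

/-- The vector g_T^{m,i} associated to the column reading tableau. -/
noncomputable def gT (n m i : ℕ) : Finset ℕ → ℝ := fun U =>
  if (∀ r ∈ Finset.Icc 1 m, ((2 * r - 1 ∈ U) ↔ ¬(2 * r ∈ U))) ∧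
      (U ∩ Finset.Icc (2 * m + 1) n).card = i then
    (-1 : ℝ) ^ ((U ∩ (Finset.range m).image (fun r => 2 * r + 1)).card)
  else 0

/-- The vector f_T^{m,ℓ} associated to the column reading tableau. -/
noncomputable def fT (n m ℓ : ℕ) : Finset ℕ → ℝ :=
  fun U => ∑ i ∈ Finset.range (n - 2 * m + 1), Tcoef n m ℓ i * gT n m i U

/-- Action of the adjacent transposition s_t (switching t and t+1) on functions. -/
noncomputable def sOp (t : ℕ) (f : Finset ℕ → ℝ) : Finset ℕ → ℝ :=
  fun U => f (U.image (Equiv.swap t (t + 1)))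

/-- The factor s_t − 1/(t − 2r + 2) (r is the 1-indexed position in the second row). -/
noncomputable def tauFactor (r t : ℕ) (f : Finset ℕ → ℝ) : Finset ℕ → ℝ :=
  fun U => sOp t f U - ((t : ℝ) - 2 * r + 2)⁻¹ * f U

/-- Composition (s_{2r+k-1} − ⋯)⋯(s_{2r} − 1/2) of k successive factors. -/
noncomputable def tauComp (r : ℕ) : ℕ → (Finset ℕ → ℝ) → (Finset ℕ → ℝ)
  | 0 => id
  | k + 1 => fun f => tauFactor r (2 * r + k) (tauComp r k f)

/-- τ_Q^{(r)} τ_Q^{(r+1)} ⋯ for the remaining second-row entries. -/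
noncomputable def tauQAux : ℕ → List ℕ → (Finset ℕ → ℝ) → (Finset ℕ → ℝ)
  | _, [] => id
  | r, a :: rest => fun f => tauComp r (a - 2 * r) (tauQAux (r + 1) rest f)

/-- The operator τ_Q for a tableau Q encoded by its list of second-row entries. -/
noncomputable def tauQ (Q : List ℕ) : (Finset ℕ → ℝ) → (Finset ℕ → ℝ) := tauQAux 1 Q

/-- A standard Young tableau of shape (n − Q.length, Q.length), encoded by the strictly
increasing list of second-row entries, each entry a_r satisfying 2r ≤ a_r ≤ n. -/
def IsSYT (n : ℕ) (Q : List ℕ) : Prop :=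
  Q.Chain' (· < ·) ∧ (∀ x ∈ Q, x ≤ n) ∧ ∀ r < Q.length, 2 * (r + 1) ≤ Q.getD r 0

/-- The eigenvectors f_Q^{m,ℓ} (here m = Q.length). -/
noncomputable def fQvec (n : ℕ) (Q : List ℕ) (ℓ : ℕ) : Finset ℕ → ℝ :=
  tauQ Q (fT n Q.length ℓ)

/-- The orthogonal vectors g_Q^{m,i} (here m = Q.length). -/
noncomputable def gQvec (n : ℕ) (Q : List ℕ) (i : ℕ) : Finset ℕ → ℝ :=
  tauQ Q (gT n Q.length i)

/-- The constant γ_Q. -/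
noncomputable def gammaQ (Q : List ℕ) : ℝ :=
  ∏ r ∈ Finset.range Q.length, ∏ c ∈ Finset.Icc 2 (Q.getD r 0 - 2 * (r + 1) + 1),
    ((c : ℝ) ^ 2 - 1) / (c : ℝ) ^ 2

/-- The Murphy (Jucys–Murphy) operator M_r acting on functions. -/
noncomputable def murphy (r : ℕ) (f : Finset ℕ → ℝ) : Finset ℕ → ℝ :=
  fun U => ∑ i ∈ Finset.Icc 1 (r - 1), f (U.image (Equiv.swap i r))

/-- The state space as a finite type. -/
noncomputable def transpEndo (n a b : ℕ) :
    Module.End ℝ ((↥((Finset.Icc 1 n).powerset)) → ℝ) where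
  toFun f U := f (if h : U.1.image (Equiv.swap a b) ∈ (Finset.Icc 1 n).powerset
    then ⟨U.1.image (Equiv.swap a b), h⟩ else U)
  map_add' f g := rfl
  map_smul' c f := rfl

noncomputable def murphyEndo (n r : ℕ) :
    Module.End ℝ ((↥((Finset.Icc 1 n).powerset)) → ℝ) :=
  ∑ i ∈ Finset.Icc 1 (r - 1), transpEndo n i r

noncomputable def KEndo (n : ℕ) :
    Module.End ℝ ((↥((Finset.Icc 1 n).powerset)) → ℝ) where
  toFun f x := ∑ y : ↥((Finset.Icc 1 n).powerset), Kmat n x.1 y.1 * f y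
  map_add' f g := by funext x; simp [mul_add, Finset.sum_add_distrib]
  map_smul' c f := by funext x; simp [Finset.mul_sum, mul_left_comm]

/-! `s`, `X`, `Y` play the roles of `s_t`, `M_t`, `M_{t+1}`, and `s g - (b - a)⁻¹ • g` is the next
vector of Young's seminormal basis. -/

namespace Seminormal

variable {K V : Type*} [Field K] [AddCommGroup V] [Module K V]
  {B : LinearMap.BilinForm K V} {s X Y : V →ₗ[K] V} {g : V} {a b : K}

theorem apply_swap_of_eigen (hss : ∀ v, s (s v) = v) (hYX : ∀ v, Y (s v) = s (X v) + v)
    (hYg : Y g = b • g) : X (s g) = b • s g - g := by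
  have h := congrArg s (hYX (s g))
  simp only [hss, hYg, map_add, map_smul] at h
  rw [h]; abel

theorem bilin_self_swap (hss : ∀ v, s (s v) = v) (hYX : ∀ v, Y (s v) = s (X v) + v)
    (hX : ∀ v w, B (X v) w = B v (X w)) (hXg : X g = a • g) (hYg : Y g = b • g)
    (hab : b - a ≠ 0) : B g (s g) = (b - a)⁻¹ * B g g := by
  have h := hX g (s g)
  rw [hXg, apply_swap_of_eigen hss hYX hYg, map_smul, map_sub, map_smul] at h
  simp only [LinearMap.smul_apply, smul_eq_mul] at h
  field_simp
  linear_combination -h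

theorem bilin_seminormal_self (hss : ∀ v, s (s v) = v) (hs : ∀ v w, B (s v) w = B v (s w))
    (hYX : ∀ v, Y (s v) = s (X v) + v) (hX : ∀ v w, B (X v) w = B v (X w))
    (hXg : X g = a • g) (hYg : Y g = b • g) (hab : b - a ≠ 0) :
    B (s g - (b - a)⁻¹ • g) (s g - (b - a)⁻¹ • g) = (1 - ((b - a)⁻¹) ^ 2) * B g g := by
  have hsg : B (s g) g = B g (s g) := hs g g
  have hss' : B (s g) (s g) = B g g := by rw [hs, hss]
  simp only [map_sub, map_smul, LinearMap.sub_apply, LinearMap.smul_apply, smul_eq_mul, hsg,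
    hss', bilin_self_swap hss hYX hX hXg hYg hab]
  ring

theorem apply_seminormal_left (hss : ∀ v, s (s v) = v) (hYX : ∀ v, Y (s v) = s (X v) + v)
    (hXg : X g = a • g) (hYg : Y g = b • g) (hab : b - a ≠ 0) :
    X (s g - (b - a)⁻¹ • g) = b • (s g - (b - a)⁻¹ • g) := by
  rw [map_sub, map_smul, apply_swap_of_eigen hss hYX hYg, hXg]
  linear_combination (norm := module) (inv_mul_cancel₀ hab) • g

theorem apply_seminormal_right (hYX : ∀ v, Y (s v) = s (X v) + v)
    (hXg : X g = a • g) (hYg : Y g = b • g) (hab : b - a ≠ 0) :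
    Y (s g - (b - a)⁻¹ • g) = a • (s g - (b - a)⁻¹ • g) := by
  rw [map_sub, map_smul, hYX, hXg, hYg, map_smul]
  linear_combination (norm := module) -(inv_mul_cancel₀ hab) • g

end Seminormal

lemma image_swap_image_swap (a b : ℕ) (U : Finset ℕ) :
    (U.image (Equiv.swap a b)).image (Equiv.swap a b) = U := by
  simp [image_image, Function.comp_def]

lemma mem_image_swap {a b x : ℕ} {U : Finset ℕ} :
    x ∈ U.image (Equiv.swap a b) ↔ Equiv.swap a b x ∈ U := by
  rw [← Equiv.coe_toEmbedding, ← map_eq_image, mem_map_equiv, Equiv.symm_swap,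
    Equiv.coe_toEmbedding]

lemma mem_image_swap_of_ne {a b x : ℕ} {U : Finset ℕ} (ha : x ≠ a) (hb : x ≠ b) :
    x ∈ U.image (Equiv.swap a b) ↔ x ∈ U := by
  rw [mem_image_swap, Equiv.swap_apply_of_ne_of_ne ha hb]

lemma image_swap_eq_self {a b : ℕ} {U : Finset ℕ} (h : a ∈ U ↔ b ∈ U) :
    U.image (Equiv.swap a b) = U := by
  ext x
  rw [mem_image_swap, Equiv.swap_apply_def]
  split_ifs with h1 h2
  · rw [h1]; exact h.symm
  · rw [h2]; exact h
  · rfl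

lemma image_swap_inter_eq {a b : ℕ} {U E : Finset ℕ} (ha : a ∉ E) (hb : b ∉ E) :
    U.image (Equiv.swap a b) ∩ E = U ∩ E := by
  ext x
  simp only [mem_inter]
  exact and_congr_left fun hx =>
    mem_image_swap_of_ne (fun h => ha (h ▸ hx)) (fun h => hb (h ▸ hx))

lemma image_swap_image_swap_conj (a b i c : ℕ) (U : Finset ℕ) :
    (U.image (Equiv.swap i c)).image (Equiv.swap a b)
      = (U.image (Equiv.swap a b)).image
          (Equiv.swap (Equiv.swap a b i) (Equiv.swap a b c)) := by
  rw [image_image, image_image]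
  congr 1
  ext x
  simp only [Function.comp_apply, Equiv.swap_apply_def]
  split_ifs <;> omega

lemma image_swap_mem_powerset {n a b : ℕ} (ha : a ∈ Icc 1 n) (hb : b ∈ Icc 1 n)
    {U : Finset ℕ} (hU : U ∈ (Icc 1 n).powerset) :
    U.image (Equiv.swap a b) ∈ (Icc 1 n).powerset := by
  rw [mem_powerset] at hU ⊢
  intro x hx
  obtain ⟨y, hy, rfl⟩ := mem_image.1 hx
  rw [Equiv.swap_apply_def]
  split_ifs
  exacts [hb, ha, hU hy]

lemma card_inter_eq_card_inter_erase_add {a : ℕ} {U O : Finset ℕ} (ha : a ∈ O) :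
    #(U ∩ O) = #(U ∩ O.erase a) + if a ∈ U then 1 else 0 := by
  rw [inter_erase]
  split_ifs with h
  · exact (card_erase_add_one (mem_inter.2 ⟨h, ha⟩)).symm
  · rw [erase_eq_of_notMem (fun h' => h (mem_inter.1 h').1), add_zero]

noncomputable def innerPiForm (n : ℕ) : LinearMap.BilinForm ℝ (Finset ℕ → ℝ) :=
  LinearMap.mk₂ ℝ (innerPi n)
    (fun f f' g => by simp only [innerPi, Pi.add_apply, add_mul, sum_add_distrib])
    (fun c f g => by simp only [innerPi, Pi.smul_apply, smul_eq_mul, mul_sum, mul_assoc])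
    (fun f g g' => by simp only [innerPi, Pi.add_apply, mul_add, add_mul, sum_add_distrib])
    (fun c f g => by
      simp only [innerPi, Pi.smul_apply, smul_eq_mul, mul_sum]
      exact sum_congr rfl fun U _ => by ring)

@[simp] lemma innerPiForm_apply (n : ℕ) (f g : Finset ℕ → ℝ) : innerPiForm n f g = innerPi n f g :=
  rfl

noncomputable def swapAct (a b : ℕ) : Module.End ℝ (Finset ℕ → ℝ) :=
  LinearMap.funLeft ℝ ℝ (Finset.image (Equiv.swap a b))

lemma swapAct_apply (a b : ℕ) (f : Finset ℕ → ℝ) (U : Finset ℕ) :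
    swapAct a b f U = f (U.image (Equiv.swap a b)) :=
  rfl

lemma swapAct_swapAct (a b : ℕ) (f : Finset ℕ → ℝ) : swapAct a b (swapAct a b f) = f := by
  ext U
  simp only [swapAct_apply, image_swap_image_swap]

lemma innerPi_swapAct {n a b : ℕ} (ha : a ∈ Icc 1 n) (hb : b ∈ Icc 1 n)
    (f g : Finset ℕ → ℝ) : innerPi n (swapAct a b f) g = innerPi n f (swapAct a b g) := by
  refine sum_nbij' (·.image (Equiv.swap a b)) (·.image (Equiv.swap a b))
    (fun U hU => image_swap_mem_powerset ha hb hU) (fun U hU => image_swap_mem_powerset ha hb hU)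
    (fun U _ => image_swap_image_swap a b U) (fun U _ => image_swap_image_swap a b U)
    (fun U _ => ?_)
  simp only [swapAct_apply, image_swap_image_swap, piDist,
    card_image_of_injective _ (Equiv.injective _)]

noncomputable def jucysMurphy (u : ℕ) : Module.End ℝ (Finset ℕ → ℝ) :=
  ∑ i ∈ Icc 1 (u - 1), swapAct i u

lemma jucysMurphy_apply (u : ℕ) (f : Finset ℕ → ℝ) (U : Finset ℕ) :
    jucysMurphy u f U = ∑ i ∈ Icc 1 (u - 1), f (U.image (Equiv.swap i u)) := by
  simp only [jucysMurphy, LinearMap.coe_sum, Finset.sum_apply, swapAct_apply]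

lemma innerPi_jucysMurphy {n u : ℕ} (hu : u ≤ n) (f g : Finset ℕ → ℝ) :
    innerPi n (jucysMurphy u f) g = innerPi n f (jucysMurphy u g) := by
  simp only [← innerPiForm_apply, jucysMurphy, LinearMap.coe_sum, Finset.sum_apply, map_sum]
  refine sum_congr rfl fun i hi => ?_
  rw [mem_Icc] at hi
  exact innerPi_swapAct (mem_Icc.2 ⟨hi.1, by omega⟩) (mem_Icc.2 ⟨by omega, hu⟩) f g

lemma jucysMurphy_succ_swapAct {t : ℕ} (ht : 1 ≤ t) (f : Finset ℕ → ℝ) :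
    jucysMurphy (t + 1) (swapAct t (t + 1) f) = swapAct t (t + 1) (jucysMurphy t f) + f := by
  obtain ⟨t, rfl⟩ := Nat.exists_eq_add_of_le' ht
  ext U
  simp only [jucysMurphy_apply, swapAct_apply, Pi.add_apply, Nat.add_sub_cancel]
  rw [sum_Icc_succ_top (by omega), image_swap_image_swap]
  congr 1
  refine sum_congr rfl fun i hi => ?_
  rw [mem_Icc] at hi
  rw [image_swap_image_swap_conj, Equiv.swap_apply_of_ne_of_ne (by omega) (by omega),
    Equiv.swap_apply_right]

lemma jucysMurphy_swapAct_comm {t u : ℕ} (ht : 1 ≤ t) (hu : u ≠ t) (hu' : u ≠ t + 1)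
    (f : Finset ℕ → ℝ) :
    jucysMurphy u (swapAct t (t + 1) f) = swapAct t (t + 1) (jucysMurphy u f) := by
  ext U
  simp only [jucysMurphy_apply, swapAct_apply]
  refine sum_equiv (Equiv.swap t (t + 1)) (fun i => ?_) (fun i _ => ?_)
  · simp only [mem_Icc, Equiv.swap_apply_def]
    split_ifs <;> omega
  · rw [image_swap_image_swap_conj, Equiv.swap_apply_of_ne_of_ne hu hu']

/-- For the vector of a standard tableau, `κ u` is the content of the box holding `u`. -/
def HasContents (n : ℕ) (κ : ℕ → ℝ) (g : Finset ℕ → ℝ) : Prop :=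
  ∀ u ∈ Icc 1 n, jucysMurphy u g = κ u • g

lemma tauFactor_eq (r t : ℕ) (g : Finset ℕ → ℝ) :
    tauFactor r t g = swapAct t (t + 1) g - ((t : ℝ) - 2 * r + 2)⁻¹ • g :=
  rfl

section tauFactor

variable {n r t : ℕ} {κ : ℕ → ℝ} {g : Finset ℕ → ℝ}

lemma hasContents_tauFactor (hg : HasContents n κ g) (ht : 1 ≤ t) (htn : t + 1 ≤ n)
    (hκ : κ (t + 1) - κ t = (t : ℝ) - 2 * r + 2) (hne : (t : ℝ) - 2 * r + 2 ≠ 0) :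
    HasContents n (κ ∘ Equiv.swap t (t + 1)) (tauFactor r t g) := by
  have hX := hg t (mem_Icc.2 ⟨ht, by omega⟩)
  have hY := hg (t + 1) (mem_Icc.2 ⟨by omega, htn⟩)
  have hYX := jucysMurphy_succ_swapAct ht
  rw [← hκ] at hne
  intro u hu
  rw [tauFactor_eq, ← hκ, Function.comp_apply]
  rcases eq_or_ne u t with rfl | hut
  · rw [Equiv.swap_apply_left]
    exact Seminormal.apply_seminormal_left (swapAct_swapAct _ _) hYX hX hY hne
  rcases eq_or_ne u (t + 1) with rfl | hut'
  · rw [Equiv.swap_apply_right]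
    exact Seminormal.apply_seminormal_right hYX hX hY hne
  · rw [Equiv.swap_apply_of_ne_of_ne hut hut', map_sub, map_smul,
      jucysMurphy_swapAct_comm ht hut hut', hg u hu, map_smul, smul_sub, smul_comm]

lemma innerPi_tauFactor_self (hg : HasContents n κ g) (ht : 1 ≤ t) (htn : t + 1 ≤ n)
    (hκ : κ (t + 1) - κ t = (t : ℝ) - 2 * r + 2) (hne : (t : ℝ) - 2 * r + 2 ≠ 0) :
    innerPi n (tauFactor r t g) (tauFactor r t g)
      = (1 - ((t : ℝ) - 2 * r + 2)⁻¹ ^ 2) * innerPi n g g := by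
  have htmem : t ∈ Icc 1 n := mem_Icc.2 ⟨ht, by omega⟩
  have ht1mem : t + 1 ∈ Icc 1 n := mem_Icc.2 ⟨by omega, htn⟩
  rw [← hκ] at hne ⊢
  rw [tauFactor_eq, ← hκ, ← innerPiForm_apply, ← innerPiForm_apply]
  exact Seminormal.bilin_seminormal_self (swapAct_swapAct _ _) (innerPi_swapAct htmem ht1mem)
    (jucysMurphy_succ_swapAct ht) (innerPi_jucysMurphy (n := n) (by omega)) (hg t htmem)
    (hg (t + 1) ht1mem) hne

end tauFactor

/-- The content of the box holding `u` in the two-row standard tableau with second row `S`: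
with `k = #{b ∈ S | b < u}`, the entry `u` sits in row 2, column `k + 1` if `u ∈ S`, and in
row 1, column `u - k` otherwise. -/
noncomputable def twoRowContent (S : Finset ℕ) (u : ℕ) : ℝ :=
  if u ∈ S then (#{b ∈ S | b < u} : ℝ) - 1 else u - #{b ∈ S | b < u} - 1

section moveUp

variable {S : Finset ℕ} {t : ℕ}

lemma card_filter_lt_succ_of_mem (ht : t ∈ S) : #{b ∈ S | b < t + 1} = #{b ∈ S | b < t} + 1 := by
  rw [← card_insert_of_notMem (by simp : t ∉ {b ∈ S | b < t})]
  congr 1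
  ext b
  simp only [mem_filter, mem_insert]
  constructor
  · rintro ⟨hb, hbt⟩
    rcases Nat.lt_succ_iff_lt_or_eq.1 hbt with h | rfl
    exacts [Or.inr ⟨hb, h⟩, Or.inl rfl]
  · rintro (rfl | ⟨hb, hbt⟩)
    exacts [⟨ht, by omega⟩, ⟨hb, by omega⟩]

lemma card_filter_lt_insert_erase (ht : t ∈ S) (ht' : t + 1 ∉ S) (u : ℕ) :
    #{b ∈ insert (t + 1) (S.erase t) | b < u} + (if t < u then 1 else 0)
      = #{b ∈ S | b < u} + (if t + 1 < u then 1 else 0) := by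
  have herase : #{b ∈ S.erase t | b < u} + (if t < u then 1 else 0) = #{b ∈ S | b < u} := by
    rw [filter_erase]
    split_ifs with h
    · exact card_erase_add_one (mem_filter.2 ⟨ht, h⟩)
    · rw [erase_eq_of_notMem (by simp [h]), add_zero]
  rw [filter_insert, ← herase]
  split_ifs with h1 h2 h2
  · rw [card_insert_of_notMem (by simp [ht'])]
  · omega
  · omega
  · rfl

lemma twoRowContent_comp_swap (ht : t ∈ S) (ht' : t + 1 ∉ S) :
    twoRowContent S ∘ Equiv.swap t (t + 1) = twoRowContent (insert (t + 1) (S.erase t)) := by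
  funext u
  have hcount := card_filter_lt_insert_erase ht ht' u
  simp only [Function.comp_apply, twoRowContent, mem_insert, mem_erase]
  rcases eq_or_ne u t with rfl | hut
  · rw [Equiv.swap_apply_left, if_neg ht', if_neg (by omega), card_filter_lt_succ_of_mem ht]
    rw [if_neg (lt_irrefl u), if_neg (by omega), add_zero, add_zero] at hcount
    rw [hcount]
    push_cast
    ring
  rcases eq_or_ne u (t + 1) with rfl | hut'
  · rw [Equiv.swap_apply_right, if_pos ht, if_pos (Or.inl rfl)]
    rw [if_pos (by omega), if_neg (by omega), card_filter_lt_succ_of_mem ht] at hcount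
    have : #{b ∈ insert (t + 1) (S.erase t) | b < t + 1} = #{b ∈ S | b < t} := by omega
    rw [this]
  · rw [Equiv.swap_apply_of_ne_of_ne hut hut']
    have : #{b ∈ insert (t + 1) (S.erase t) | b < u} = #{b ∈ S | b < u} := by
      split_ifs at hcount <;> omega
    simp only [this, hut', hut, ne_eq, not_false_eq_true, true_and, false_or]

lemma twoRowContent_succ_sub (ht : t ∈ S) (ht' : t + 1 ∉ S) :
    twoRowContent S (t + 1) - twoRowContent S t = (t : ℝ) - 2 * #{b ∈ S | b < t} := by
  simp only [twoRowContent, if_pos ht, if_neg ht', card_filter_lt_succ_of_mem ht]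
  push_cast
  ring

end moveUp

lemma hasContents_tauFactor_twoRowContent_and_innerPi_self {n r t : ℕ} {S : Finset ℕ}
    {g : Finset ℕ → ℝ} (hg : HasContents n (twoRowContent S) g) (hrt : 2 * r ≤ t) (ht : 1 ≤ t)
    (htn : t + 1 ≤ n) (htS : t ∈ S) (ht'S : t + 1 ∉ S) (hbelow : #{b ∈ S | b < t} + 1 = r) :
    HasContents n (twoRowContent (insert (t + 1) (S.erase t))) (tauFactor r t g) ∧
      innerPi n (tauFactor r t g) (tauFactor r t g)
        = (1 - ((t : ℝ) - 2 * r + 2)⁻¹ ^ 2) * innerPi n g g := by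
  have hκ : twoRowContent S (t + 1) - twoRowContent S t = (t : ℝ) - 2 * r + 2 := by
    rw [twoRowContent_succ_sub htS ht'S, ← hbelow]
    push_cast
    ring
  have hne : (t : ℝ) - 2 * r + 2 ≠ 0 := by
    have : (2 * r : ℝ) ≤ t := by exact_mod_cast hrt
    linarith
  refine ⟨?_, innerPi_tauFactor_self hg ht htn hκ hne⟩
  rw [← twoRowContent_comp_swap htS ht'S]
  exact hasContents_tauFactor hg ht htn hκ hne

lemma card_filter_lt_insert_erase_of_gap {S : Finset ℕ} {a t : ℕ} (hat : a ≤ t)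
    (hgap : ∀ u ∈ S, u ≤ a ∨ t < u) : #{b ∈ insert t (S.erase a) | b < t} = #{b ∈ S | b < a} := by
  congr 1
  ext b
  simp only [mem_filter, mem_insert, mem_erase]
  constructor
  · rintro ⟨(rfl | ⟨hb, hbS⟩), hbt⟩
    · omega
    · have := hgap b hbS; exact ⟨hbS, by omega⟩
  · rintro ⟨hbS, hb⟩
    exact ⟨Or.inr ⟨by omega, hbS⟩, by omega⟩

/-- `tauComp r k` is `τ_Q^{(r)}` for `a_r = 2r + k`: on tableaux it moves the entry `2r` of the
second row to `2r + k`. -/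
lemma hasContents_tauComp_and_innerPi_self {n r k : ℕ} {S : Finset ℕ} {g : Finset ℕ → ℝ}
    (hg : HasContents n (twoRowContent S) g) (hr : 1 ≤ r) (hkn : 2 * r + k ≤ n)
    (hS : 2 * r ∈ S) (hbelow : #{b ∈ S | b < 2 * r} + 1 = r)
    (hgap : ∀ u ∈ S, u ≤ 2 * r ∨ 2 * r + k < u) :
    HasContents n (twoRowContent (insert (2 * r + k) (S.erase (2 * r)))) (tauComp r k g) ∧
      innerPi n (tauComp r k g) (tauComp r k g)
        = (∏ c ∈ Icc 2 (k + 1), ((c : ℝ) ^ 2 - 1) / (c : ℝ) ^ 2) * innerPi n g g := by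
  induction k with
  | zero => exact ⟨by rwa [add_zero, insert_erase hS], by simp [tauComp]⟩
  | succ k ih =>
    obtain ⟨hgk, hnorm⟩ := ih (by omega) fun u hu => (hgap u hu).imp_right (by omega)
    have htS : 2 * r + k ∉ S.erase (2 * r) := fun h => by
      have := hgap _ (mem_of_mem_erase h); have := ne_of_mem_erase h; omega
    have ht'S : 2 * r + k + 1 ∉ insert (2 * r + k) (S.erase (2 * r)) := by
      simp only [mem_insert, mem_erase, not_or]
      exact ⟨by omega, fun ⟨_, h⟩ => by have := hgap _ h; omega⟩
    obtain ⟨hgk', hnorm'⟩ := hasContents_tauFactor_twoRowContent_and_innerPi_self (r := r) hgk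
      (by omega) (by omega) (by omega) (mem_insert_self _ _) ht'S
      (by rwa [card_filter_lt_insert_erase_of_gap (by omega) fun u hu =>
        (hgap u hu).imp_right (by omega)])
    refine ⟨by rwa [erase_insert htS] at hgk', ?_⟩
    have hk : (k : ℝ) + 2 ≠ 0 := by positivity
    rw [show tauComp r (k + 1) g = tauFactor r (2 * r + k) (tauComp r k g) from rfl, hnorm',
      hnorm, prod_Icc_succ_top (by omega : 2 ≤ k + 1 + 1),
      show ((2 * r + k : ℕ) : ℝ) - 2 * r + 2 = k + 2 by push_cast; ring]
    push_cast
    field_simp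
    ring

/-- The second row of the column reading tableau of shape `(n - k, k)`. -/
def columnReadingRow (k : ℕ) : Finset ℕ := (Icc 1 k).image (2 * ·)

lemma mem_columnReadingRow {k x : ℕ} : x ∈ columnReadingRow k ↔ x % 2 = 0 ∧ 0 < x ∧ x ≤ 2 * k := by
  simp only [columnReadingRow, mem_image, mem_Icc]
  constructor
  · rintro ⟨j, hj, rfl⟩; omega
  · rintro ⟨h0, h1, h2⟩; exact ⟨x / 2, by omega, by omega⟩

lemma card_filter_columnReadingRow_lt (k u : ℕ) :
    #{b ∈ columnReadingRow k | b < u} = min k ((u - 1) / 2) := by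
  have : {j ∈ Icc 1 k | 2 * j < u} = Icc 1 (min k ((u - 1) / 2)) := by
    ext j
    simp only [mem_filter, mem_Icc]
    omega
  rw [columnReadingRow, filter_image, card_image_of_injective _ (fun _ _ h => by omega)]
  simp only [this, Nat.card_Icc, Nat.add_sub_cancel]

lemma card_filter_columnReadingRow_union_lt {r : ℕ} {L : List ℕ} (hr : 1 ≤ r)
    (hL : ∀ x ∈ L, 2 * r < x) : #{b ∈ columnReadingRow r ∪ L.toFinset | b < 2 * r} + 1 = r := by
  rw [filter_union, (filter_eq_empty_iff (s := L.toFinset)).2 fun x hx => by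
      have := hL x (List.mem_toFinset.1 hx); omega,
    union_empty, card_filter_columnReadingRow_lt]
  omega

lemma insert_erase_columnReadingRow_union {r a : ℕ} {L : List ℕ} (hr : 1 ≤ r) (ha : 2 * r ≤ a)
    (hL : ∀ x ∈ L, a < x) :
    insert a ((columnReadingRow r ∪ L.toFinset).erase (2 * r))
      = columnReadingRow (r - 1) ∪ (a :: L).toFinset := by
  ext x
  by_cases hx : x ∈ L
  · have := hL x hx
    simp only [mem_insert, mem_erase, mem_union, List.mem_toFinset, hx, List.mem_cons,
      or_true, and_true, iff_true]
    exact Or.inr (by omega)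
  · simp only [mem_insert, mem_erase, mem_union, List.mem_toFinset, hx, List.mem_cons,
      or_false, mem_columnReadingRow]
    constructor <;> intro h <;> omega

/-- `tauQAux r L` is `τ_Q^{(r)} ⋯ τ_Q^{(m)}` for `L = [a_r, …, a_m]`: it carries the column
reading tableau to the tableau with second row `{2, 4, …, 2(r - 1)} ∪ L`. -/
lemma hasContents_tauQAux_and_innerPi_self {n m : ℕ} {f : Finset ℕ → ℝ}
    (hf : HasContents n (twoRowContent (columnReadingRow m)) f) (L : List ℕ) (r : ℕ)
    (hr : 1 ≤ r) (hlen : r + L.length = m + 1) (hsorted : L.Pairwise (· < ·))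
    (hle : ∀ x ∈ L, x ≤ n) (hget : ∀ j < L.length, 2 * (j + r) ≤ L.getD j 0) :
    HasContents n (twoRowContent (columnReadingRow (r - 1) ∪ L.toFinset)) (tauQAux r L f) ∧
      innerPi n (tauQAux r L f) (tauQAux r L f)
        = (∏ j ∈ range L.length, ∏ c ∈ Icc 2 (L.getD j 0 - 2 * (j + r) + 1),
            ((c : ℝ) ^ 2 - 1) / (c : ℝ) ^ 2) * innerPi n f f := by
  induction L generalizing r with
  | nil =>
    obtain rfl : r = m + 1 := by simpa using hlen
    exact ⟨by simpa [tauQAux] using hf, by simp [tauQAux]⟩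
  | cons a rest ih =>
    obtain ⟨hgt, hsorted'⟩ := List.pairwise_cons.1 hsorted
    have ha : 2 * r ≤ a := by simpa using hget 0 (by simp)
    obtain ⟨hg, hnorm⟩ := ih (r + 1) (by omega) (by rw [List.length_cons] at hlen; omega) hsorted'
      (fun x hx => hle x (List.mem_cons_of_mem a hx))
      (fun j hj => by
        have := hget (j + 1) (by simp; omega)
        rw [List.getD_cons_succ] at this
        omega)
    rw [Nat.add_sub_cancel] at hg
    have hgap : ∀ u ∈ columnReadingRow r ∪ rest.toFinset, u ≤ 2 * r ∨ 2 * r + (a - 2 * r) < u :=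
      fun u hu => by
        rcases mem_union.1 hu with hu | hu
        · exact Or.inl (mem_columnReadingRow.1 hu).2.2
        · have := hgt u (List.mem_toFinset.1 hu); omega
    obtain ⟨hg', hnorm'⟩ := hasContents_tauComp_and_innerPi_self hg hr
      (by have := hle a List.mem_cons_self; omega)
      (mem_union_left _ (mem_columnReadingRow.2 ⟨by omega, by omega, le_rfl⟩))
      (card_filter_columnReadingRow_union_lt hr fun x hx => by have := hgt x hx; omega) hgap
    rw [Nat.add_sub_cancel' ha, insert_erase_columnReadingRow_union hr ha hgt] at hg'
    refine ⟨hg', ?_⟩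
    have hprod : ∀ j ∈ range rest.length,
        ∏ c ∈ Icc 2 ((a :: rest).getD (j + 1) 0 - 2 * (j + 1 + r) + 1), ((c : ℝ) ^ 2 - 1) / c ^ 2
          = ∏ c ∈ Icc 2 (rest.getD j 0 - 2 * (j + (r + 1)) + 1), ((c : ℝ) ^ 2 - 1) / c ^ 2 :=
      fun j _ => by rw [List.getD_cons_succ, show j + 1 + r = j + (r + 1) by ring]
    rw [show tauQAux r (a :: rest) f = tauComp r (a - 2 * r) (tauQAux (r + 1) rest f) from rfl,
      hnorm', hnorm, List.length_cons, prod_range_succ', prod_congr rfl hprod,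
      List.getD_cons_zero, zero_add]
    ring

def OnePerPair (m : ℕ) (U : Finset ℕ) : Prop :=
  ∀ r ∈ Icc 1 m, (2 * r - 1 ∈ U ↔ ¬2 * r ∈ U)

lemma onePerPair_congr {m : ℕ} {U V : Finset ℕ} (h : V ∩ Icc 1 (2 * m) = U ∩ Icc 1 (2 * m)) :
    OnePerPair m V ↔ OnePerPair m U := by
  have hmem : ∀ x, 1 ≤ x → x ≤ 2 * m → (x ∈ V ↔ x ∈ U) := fun x h0 h1 => by
    simpa [mem_inter, mem_Icc, h0, h1] using congrArg (x ∈ ·) h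
  refine forall₂_congr fun r hr => ?_
  rw [mem_Icc] at hr
  rw [hmem _ (by omega) (by omega), hmem _ (by omega) (by omega)]

lemma onePerPair_image_swap_pair {m s : ℕ} (hs : s ∈ Icc 1 m) (U : Finset ℕ) :
    OnePerPair m (U.image (Equiv.swap (2 * s - 1) (2 * s))) ↔ OnePerPair m U := by
  rw [mem_Icc] at hs
  refine forall₂_congr fun r hr => ?_
  rw [mem_Icc] at hr
  rcases eq_or_ne r s with rfl | hrs
  · rw [mem_image_swap, mem_image_swap, Equiv.swap_apply_left, Equiv.swap_apply_right]; tauto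
  · rw [mem_image_swap_of_ne (by omega) (by omega), mem_image_swap_of_ne (by omega) (by omega)]

lemma gT_apply (n m i : ℕ) (U : Finset ℕ) :
    gT n m i U = if OnePerPair m U ∧ #(U ∩ Icc (2 * m + 1) n) = i then
      (-1 : ℝ) ^ #(U ∩ (range m).image (fun r => 2 * r + 1)) else 0 := by
  unfold gT OnePerPair
  congr

section gT

variable {n m i : ℕ}

lemma gT_eq_zero_of_iff {s : ℕ} (hs : s ∈ Icc 1 m) {U : Finset ℕ} (h : 2 * s - 1 ∈ U ↔ 2 * s ∈ U) :
    gT n m i U = 0 :=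
  if_neg fun hU => by have := hU.1 s hs; tauto

lemma gT_image_swap_pair {s : ℕ} (hs : s ∈ Icc 1 m) (U : Finset ℕ) :
    gT n m i (U.image (Equiv.swap (2 * s - 1) (2 * s))) = -gT n m i U := by
  have hs' := mem_Icc.1 hs
  set O := (range m).image (fun r => 2 * r + 1)
  have hodd : 2 * s - 1 ∈ O := mem_image.2 ⟨s - 1, mem_range.2 (by omega), by omega⟩
  have heven : 2 * s ∉ O.erase (2 * s - 1) := fun h => by
    obtain ⟨r, -, hr⟩ := mem_image.1 (mem_of_mem_erase h); omega
  rw [gT_apply, gT_apply, onePerPair_image_swap_pair hs,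
    image_swap_inter_eq (E := Icc (2 * m + 1) n) (by simp; omega) (by simp; omega)]
  split_ifs with hU
  · have hflip := hU.1 s hs
    have hmem : 2 * s - 1 ∈ U.image (Equiv.swap (2 * s - 1) (2 * s)) ↔ 2 * s ∈ U := by
      rw [mem_image_swap, Equiv.swap_apply_left]
    rw [card_inter_eq_card_inter_erase_add hodd, card_inter_eq_card_inter_erase_add hodd (U := U),
      image_swap_inter_eq (notMem_erase _ _) heven]
    by_cases h : 2 * s - 1 ∈ U
    · rw [if_pos h, if_neg (mt hmem.1 (hflip.1 h)), pow_add, pow_add]; ring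
    · rw [if_neg h, if_pos (hmem.2 (not_not.1 (mt hflip.2 h))), pow_add, pow_add]; ring
  · rw [neg_zero]

lemma gT_image_swap_of_tail {j u : ℕ} (hj : j ∈ Icc (2 * m + 1) n) (hu : u ∈ Icc (2 * m + 1) n)
    (U : Finset ℕ) : gT n m i (U.image (Equiv.swap j u)) = gT n m i U := by
  rw [mem_Icc] at hj hu
  have hodd : ∀ x, 2 * m < x → x ∉ (range m).image (fun r => 2 * r + 1) := fun x hx h => by
    obtain ⟨r, hr, rfl⟩ := mem_image.1 h
    rw [mem_range] at hr
    omega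
  have htail : #(U.image (Equiv.swap j u) ∩ Icc (2 * m + 1) n) = #(U ∩ Icc (2 * m + 1) n) := by
    rw [← image_swap_eq_self (a := j) (b := u) (U := Icc (2 * m + 1) n) (by simp; omega),
      ← image_inter _ _ (Equiv.injective _), card_image_of_injective _ (Equiv.injective _),
      image_swap_eq_self (by simp; omega)]
  rw [gT_apply, gT_apply, htail, image_swap_inter_eq (hodd j (by omega)) (hodd u (by omega)),
    onePerPair_congr (image_swap_inter_eq (by simp; omega) (by simp; omega))]

/-- If `2s - 1, 2s` are both in or both out of `U`, the two terms cancel; otherwise one swap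
fixes `U` and the other yields a set on which `gT` vanishes. -/
lemma gT_image_swap_pair_add {s u : ℕ} (hs : s ∈ Icc 1 m) (hu : 2 * s < u) (U : Finset ℕ) :
    gT n m i (U.image (Equiv.swap (2 * s - 1) u)) + gT n m i (U.image (Equiv.swap (2 * s) u))
      = gT n m i U := by
  have hs' := mem_Icc.1 hs
  have hswap₁ := image_swap_image_swap_conj (2 * s - 1) (2 * s) (2 * s - 1) u U
  rw [Equiv.swap_apply_left, Equiv.swap_apply_of_ne_of_ne (by omega) (by omega)] at hswap₁
  by_cases hpair : 2 * s - 1 ∈ U ↔ 2 * s ∈ U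
  · rw [gT_eq_zero_of_iff hs hpair]
    by_cases hu' : 2 * s - 1 ∈ U ↔ u ∈ U
    · rw [image_swap_eq_self hu', image_swap_eq_self (hpair.symm.trans hu'),
        gT_eq_zero_of_iff hs hpair, add_zero]
    · rw [image_swap_eq_self hpair] at hswap₁
      rw [← hswap₁, gT_image_swap_pair hs, add_neg_cancel]
  · have h₁ : (u ∈ U ↔ 2 * s ∈ U) → gT n m i (U.image (Equiv.swap (2 * s - 1) u)) = 0 :=
      fun h => gT_eq_zero_of_iff hs (by rw [mem_image_swap, mem_image_swap,
        Equiv.swap_apply_left, Equiv.swap_apply_of_ne_of_ne (by omega) (by omega), h])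
    have h₂ : (u ∈ U ↔ 2 * s - 1 ∈ U) → gT n m i (U.image (Equiv.swap (2 * s) u)) = 0 :=
      fun h => gT_eq_zero_of_iff hs (by rw [mem_image_swap, mem_image_swap,
        Equiv.swap_apply_of_ne_of_ne (by omega) (by omega), Equiv.swap_apply_left, h])
    by_cases hu' : 2 * s - 1 ∈ U ↔ u ∈ U
    · rw [image_swap_eq_self hu', h₂ hu'.symm, add_zero]
    · rw [image_swap_eq_self (a := 2 * s) (by tauto), h₁ (by tauto), zero_add]

lemma sum_gT_image_swap_Icc {k u : ℕ} (hk : k ≤ m) (hu : 2 * k < u) (U : Finset ℕ) :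
    ∑ j ∈ Icc 1 (2 * k), gT n m i (U.image (Equiv.swap j u)) = k * gT n m i U := by
  induction k with
  | zero => simp
  | succ k ih =>
    rw [show 2 * (k + 1) = 2 * k + 1 + 1 by ring, sum_Icc_succ_top (by omega),
      sum_Icc_succ_top (by omega), ih (by omega) (by omega), add_assoc,
      show 2 * k + 1 = 2 * (k + 1) - 1 by omega, show 2 * (k + 1) - 1 + 1 = 2 * (k + 1) by omega,
      gT_image_swap_pair_add (mem_Icc.2 ⟨by omega, hk⟩) (by omega)]
    push_cast
    ring

end gT

lemma fT_eq_sum (n m ℓ : ℕ) : fT n m ℓ = ∑ i ∈ range (n - 2 * m + 1), Tcoef n m ℓ i • gT n m i := by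
  ext U
  simp [fT]

lemma hasContents_gT (n m i : ℕ) :
    HasContents n (twoRowContent (columnReadingRow m)) (gT n m i) := by
  intro u hu
  rw [mem_Icc] at hu
  ext U
  rw [jucysMurphy_apply, Pi.smul_apply, smul_eq_mul, twoRowContent, card_filter_columnReadingRow_lt]
  by_cases htail : 2 * m < u
  · have hsplit : Icc 1 (u - 1) = Icc 1 (2 * m) ∪ Icc (2 * m + 1) (u - 1) := by
      ext x; simp only [mem_union, mem_Icc]; omega
    rw [if_neg (by rw [mem_columnReadingRow]; omega), min_eq_left (by omega), hsplit,
      sum_union (disjoint_left.2 fun x hx hx' => by rw [mem_Icc] at hx hx'; omega),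
      sum_gT_image_swap_Icc le_rfl htail,
      sum_congr rfl fun j hj => gT_image_swap_of_tail (mem_Icc.2 ⟨(mem_Icc.1 hj).1, by
        have := (mem_Icc.1 hj).2; omega⟩) (mem_Icc.2 ⟨htail, hu.2⟩) U,
      sum_const, Nat.card_Icc, nsmul_eq_mul,
      show u - 1 + 1 - (2 * m + 1) = u - (2 * m + 1) by omega, Nat.cast_sub htail]
    push_cast
    ring
  obtain ⟨r, rfl | rfl⟩ := Nat.even_or_odd' u
  · have hr : r ∈ Icc 1 m := mem_Icc.2 ⟨by omega, by omega⟩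
    have hflip := gT_image_swap_pair (n := n) (i := i) hr U
    rw [if_pos (by rw [mem_columnReadingRow]; omega), min_eq_right (by omega),
      show 2 * r - 1 = 2 * (r - 1) + 1 by omega, sum_Icc_succ_top (by omega),
      sum_gT_image_swap_Icc (by omega) (by omega), show 2 * (r - 1) + 1 = 2 * r - 1 by omega,
      hflip, show (2 * r - 1) / 2 = r - 1 by omega, Nat.cast_sub (by omega : 1 ≤ r)]
    push_cast
    ring
  · rw [if_neg (by rw [mem_columnReadingRow]; omega), min_eq_right (by omega), Nat.add_sub_cancel,
      sum_gT_image_swap_Icc (by omega) (by omega), show 2 * r / 2 = r by omega]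
    push_cast
    ring

lemma hasContents_fT (n m ℓ : ℕ) :
    HasContents n (twoRowContent (columnReadingRow m)) (fT n m ℓ) := by
  intro u hu
  rw [fT_eq_sum, map_sum, smul_sum]
  refine sum_congr rfl fun i _ => ?_
  rw [map_smul, hasContents_gT n m i u hu, smul_comm]

/-- Parametrises the sets with exactly one element in each pair `{2r - 1, 2r}`, `r ≤ m`:
`A` records the pairs contributing `2r`. -/
def pairTransversal (m : ℕ) (A B : Finset ℕ) : Finset ℕ :=
  (Icc 1 m).image (fun r => if r ∈ A then 2 * r else 2 * r - 1) ∪ B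

section pairTransversal

variable {n m : ℕ} {A B : Finset ℕ}

lemma mem_pairTransversal {x : ℕ} :
    x ∈ pairTransversal m A B ↔ (0 < x ∧ x ≤ 2 * m ∧ (x % 2 = 0 ↔ (x + 1) / 2 ∈ A)) ∨ x ∈ B := by
  rw [pairTransversal, mem_union]
  refine or_congr_left ⟨fun hx => ?_, fun ⟨h0, h1, h2⟩ =>
    mem_image.2 ⟨(x + 1) / 2, mem_Icc.2 ⟨by omega, by omega⟩, ?_⟩⟩
  · obtain ⟨r, hr, rfl⟩ := mem_image.1 hx
    rw [mem_Icc] at hr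
    by_cases h : r ∈ A
    · rw [if_pos h, show (2 * r + 1) / 2 = r by omega]
      exact ⟨by omega, by omega, by simp [h]⟩
    · rw [if_neg h, show (2 * r - 1 + 1) / 2 = r by omega]
      exact ⟨by omega, by omega, by simp [h]; omega⟩
  · by_cases h : (x + 1) / 2 ∈ A
    · rw [if_pos h]; have := h2.2 h; omega
    · rw [if_neg h]; have := mt h2.1 h; omega

lemma card_pairTransversal (hB : B ⊆ Icc (2 * m + 1) n) : #(pairTransversal m A B) = m + #B := by
  rw [pairTransversal, card_union_of_disjoint, card_image_of_injOn, Nat.card_Icc,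
    Nat.add_sub_cancel]
  · intro r _ r' _ h
    dsimp only at h
    split_ifs at h <;> omega
  · refine disjoint_left.2 fun x hx hxB => ?_
    obtain ⟨r, hr, rfl⟩ := mem_image.1 hx
    have := mem_Icc.1 (hB hxB)
    rw [mem_Icc] at hr
    split_ifs at this <;> omega

lemma pairTransversal_subset_Icc (hm : 2 * m ≤ n) (hB : B ⊆ Icc (2 * m + 1) n) :
    pairTransversal m A B ⊆ Icc 1 n := fun x hx => by
  rcases mem_pairTransversal.1 hx with h | h
  · exact mem_Icc.2 ⟨h.1, by omega⟩
  · have := mem_Icc.1 (hB h); exact mem_Icc.2 ⟨by omega, this.2⟩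

lemma onePerPair_pairTransversal (hB : B ⊆ Icc (2 * m + 1) n) :
    OnePerPair m (pairTransversal m A B) := fun r hr => by
  rw [mem_Icc] at hr
  have hnB : ∀ x ≤ 2 * m, x ∉ B := fun x hx h => by have := mem_Icc.1 (hB h); omega
  rw [mem_pairTransversal, mem_pairTransversal, show (2 * r - 1 + 1) / 2 = r by omega,
    show (2 * r + 1) / 2 = r by omega]
  simp only [hnB _ (show 2 * r - 1 ≤ 2 * m by omega), hnB _ (show 2 * r ≤ 2 * m by omega),
    or_false, Nat.mul_mod_right, true_iff, show (2 * r - 1) % 2 ≠ 0 by omega, false_iff]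
  exact ⟨fun h h' => h.2.2 h'.2.2,
    fun h => ⟨by omega, by omega, fun h' => h ⟨by omega, by omega, h'⟩⟩⟩

lemma pairTransversal_inter_Icc (hB : B ⊆ Icc (2 * m + 1) n) :
    pairTransversal m A B ∩ Icc (2 * m + 1) n = B := by
  ext x
  rw [mem_inter, mem_pairTransversal, mem_Icc]
  constructor
  · rintro ⟨h | h, hx⟩
    · omega
    · exact h
  · intro h
    exact ⟨Or.inr h, mem_Icc.1 (hB h)⟩

lemma filter_mem_pairTransversal (hA : A ⊆ Icc 1 m) (hB : B ⊆ Icc (2 * m + 1) n) :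
    {r ∈ Icc 1 m | 2 * r ∈ pairTransversal m A B} = A := by
  ext r
  rw [mem_filter, mem_pairTransversal, show (2 * r + 1) / 2 = r by omega, mem_Icc]
  constructor
  · rintro ⟨hr, h | h⟩
    · exact h.2.2.1 (by omega)
    · have := mem_Icc.1 (hB h); omega
  · intro h
    have := mem_Icc.1 (hA h)
    exact ⟨this, Or.inl ⟨by omega, by omega, iff_of_true (by omega) h⟩⟩

lemma pairTransversal_filter_inter {U : Finset ℕ} (hU : U ⊆ Icc 1 n) (hpair : OnePerPair m U) :
    pairTransversal m {r ∈ Icc 1 m | 2 * r ∈ U} (U ∩ Icc (2 * m + 1) n) = U := by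
  ext x
  rw [mem_pairTransversal, mem_filter, mem_inter, mem_Icc, mem_Icc]
  by_cases hx : 0 < x ∧ x ≤ 2 * m
  · have hp := hpair ((x + 1) / 2) (mem_Icc.2 ⟨by omega, by omega⟩)
    rw [show 2 * ((x + 1) / 2) = x + x % 2 by omega] at hp ⊢
    rcases Nat.mod_two_eq_zero_or_one x with h | h
    · simp only [h, add_zero, true_iff] at hp ⊢
      constructor
      · rintro (⟨-, -, -, hxU⟩ | ⟨-, hx', -⟩)
        exacts [hxU, absurd hx' (by omega)]
      · exact fun hxU => Or.inl ⟨hx.1, hx.2, ⟨by omega, by omega⟩, hxU⟩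
    · rw [h, show x + 1 - 1 = x by omega] at hp
      simp only [h, one_ne_zero, false_iff]
      constructor
      · rintro (⟨-, -, hxU⟩ | ⟨-, hx', -⟩)
        exacts [hp.2 fun h' => hxU ⟨⟨by omega, by omega⟩, h'⟩, absurd hx' (by omega)]
      · exact fun hxU => Or.inl ⟨hx.1, hx.2, fun ⟨_, h'⟩ => hp.1 hxU h'⟩
  · constructor
    · rintro (h | ⟨hxU, -⟩)
      exacts [absurd ⟨h.1, h.2.1⟩ hx, hxU]
    · intro hxU
      have := mem_Icc.1 (hU hxU)
      exact Or.inr ⟨hxU, by omega, this.2⟩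

end pairTransversal

lemma sum_piDist_onePerPair {n m i : ℕ} (hm : 2 * m ≤ n) :
    ∑ U ∈ (Icc 1 n).powerset with OnePerPair m U ∧ #(U ∩ Icc (2 * m + 1) n) = i, piDist n U
      = 2 ^ m * (n - 2 * m).choose i / ((n + 1) * n.choose (m + i)) := by
  have hprod : #((Icc 1 m).powerset ×ˢ (Icc (2 * m + 1) n).powersetCard i)
      = 2 ^ m * (n - 2 * m).choose i := by
    rw [card_product, card_powerset, card_powersetCard, Nat.card_Icc, Nat.card_Icc,
      Nat.add_sub_cancel, show n + 1 - (2 * m + 1) = n - 2 * m by omega]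
  have hmem : ∀ p ∈ (Icc 1 m).powerset ×ˢ (Icc (2 * m + 1) n).powersetCard i,
      p.1 ⊆ Icc 1 m ∧ p.2 ⊆ Icc (2 * m + 1) n ∧ #p.2 = i := fun p hp => by
    simpa only [mem_product, mem_powerset, mem_powersetCard] using hp
  rw [← sum_nbij' (fun p => pairTransversal m p.1 p.2)
      (fun U => ({r ∈ Icc 1 m | 2 * r ∈ U}, U ∩ Icc (2 * m + 1) n))
      (f := fun _ => 1 / ((n + 1) * n.choose (m + i) : ℝ)), sum_const, hprod, nsmul_eq_mul]
  · push_cast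
    ring
  · intro p hp
    obtain ⟨-, hB, hcard⟩ := hmem p hp
    exact mem_filter.2 ⟨mem_powerset.2 (pairTransversal_subset_Icc hm hB),
      onePerPair_pairTransversal hB, by rw [pairTransversal_inter_Icc hB, hcard]⟩
  · intro U hU
    obtain ⟨-, -, hcard⟩ := mem_filter.1 hU
    exact mem_product.2 ⟨mem_powerset.2 (filter_subset _ _),
      mem_powersetCard.2 ⟨inter_subset_right, hcard⟩⟩
  · intro p hp
    obtain ⟨hA, hB, -⟩ := hmem p hp
    exact Prod.ext (filter_mem_pairTransversal hA hB) (pairTransversal_inter_Icc hB)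
  · intro U hU
    obtain ⟨hUn, hpair, -⟩ := mem_filter.1 hU
    exact pairTransversal_filter_inter (mem_powerset.1 hUn) hpair
  · intro p hp
    obtain ⟨-, hB, hcard⟩ := hmem p hp
    rw [piDist, card_pairTransversal hB, hcard]

lemma gT_mul_gT_of_ne {n m i j : ℕ} (h : i ≠ j) (U : Finset ℕ) : gT n m i U * gT n m j U = 0 := by
  simp only [gT_apply]
  split_ifs with hi hj
  · exact absurd (hi.2.symm.trans hj.2) h
  all_goals ring

lemma gT_mul_self (n m i : ℕ) (U : Finset ℕ) :
    gT n m i U * gT n m i U = if OnePerPair m U ∧ #(U ∩ Icc (2 * m + 1) n) = i then 1 else 0 := by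
  simp only [gT_apply]
  split_ifs
  · rw [← mul_pow]; norm_num
  · ring

lemma innerPi_gT_self {n m : ℕ} (hm : 2 * m ≤ n) (i : ℕ) :
    innerPi n (gT n m i) (gT n m i)
      = 2 ^ m * (n - 2 * m).choose i / ((n + 1) * n.choose (m + i)) := by
  simp only [innerPi, gT_mul_self, ite_mul, one_mul, zero_mul]
  rw [← sum_filter, sum_piDist_onePerPair hm]

lemma innerPi_fT_self {n m : ℕ} (hm : 2 * m ≤ n) (ℓ : ℕ) :
    innerPi n (fT n m ℓ) (fT n m ℓ) = 2 ^ m / (n + 1) * ∑ i ∈ range (n - 2 * m + 1),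
      Tcoef n m ℓ i ^ 2 * ((n - 2 * m).choose i / n.choose (m + i)) := by
  rw [← innerPiForm_apply, fT_eq_sum]
  simp only [map_sum, map_smul, LinearMap.coe_sum, Finset.sum_apply, LinearMap.smul_apply,
    smul_eq_mul, innerPiForm_apply, mul_sum]
  refine sum_congr rfl fun i hi => ?_
  rw [sum_eq_single i (fun j _ hj => by
    rw [innerPi, sum_eq_zero fun U _ => by rw [gT_mul_gT_of_ne hj, zero_mul], mul_zero,
      mul_zero]) (fun h => absurd hi h), innerPi_gT_self hm]
  field_simp

theorem fQ_norm_general (n m ℓ : ℕ) (Q : List ℕ) (hm : 2 * m ≤ n) (hQm : Q.length = m)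
    (hQ : IsSYT n Q) :
    innerPi n (fQvec n Q ℓ) (fQvec n Q ℓ) = gammaQ Q * innerPi n (fT n m ℓ) (fT n m ℓ) ∧
    innerPi n (fQvec n Q ℓ) (fQvec n Q ℓ) =
      gammaQ Q * (2 ^ m / (n + 1)) *
        ∑ i ∈ Finset.range (n - 2 * m + 1),
          (Tcoef n m ℓ i) ^ 2 * (((n - 2 * m).choose i : ℝ) / (n.choose (m + i))) := by
  subst hQm
  obtain ⟨hsorted, hle, hget⟩ := hQ
  have hnorm : innerPi n (fQvec n Q ℓ) (fQvec n Q ℓ)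
      = gammaQ Q * innerPi n (fT n Q.length ℓ) (fT n Q.length ℓ) :=
    (hasContents_tauQAux_and_innerPi_self (hasContents_fT n Q.length ℓ) Q 1 le_rfl
      (add_comm _ _) (List.isChain_iff_pairwise.1 hsorted) hle hget).2
  exact ⟨hnorm, by rw [hnorm, innerPi_fT_self hm, mul_assoc]⟩

/-- norm formula ⟨f_Q^{m,ℓ}, f_Q^{m,ℓ}⟩_π = γ_Q ⟨f_T^{m,ℓ}, f_T^{m,ℓ}⟩_π
= γ_Q (2^m/(n+1)) Σ_i (T_{m,n}^{(ℓ)}(i))² C(n−2m,i)/C(n,m+i). -/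
theorem fQ_norm (n m ℓ : ℕ) (Q : List ℕ) (hm : 2 * m ≤ n) (hQm : Q.length = m)
    (hQ : IsSYT n Q) (hℓ : ℓ ≤ n - 2 * m) :
    innerPi n (fQvec n Q ℓ) (fQvec n Q ℓ) = gammaQ Q * innerPi n (fT n m ℓ) (fT n m ℓ) ∧
    innerPi n (fQvec n Q ℓ) (fQvec n Q ℓ) =
      gammaQ Q * (2 ^ m / (n + 1)) *
        ∑ i ∈ Finset.range (n - 2 * m + 1),
          (Tcoef n m ℓ i) ^ 2 * (((n - 2 * m).choose i : ℝ) / (n.choose (m + i))) :=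
  fQ_norm_general n m ℓ Q hm hQm hQ
end

section
/- For all integers n, m, ℓ₁, ℓ₂ with 0 ≤ m ≤ ⌊n/2⌋, 0 ≤ ℓ₁, ℓ₂ ≤ n−2m, and ℓ₁ ≠ ℓ₂: Σ_{i=0}^{n−2m} T_{m,n}^{(ℓ₁)}(i) · T_{m,n}^{(ℓ₂)}(i) · C(n−2m,i)/C(n,m+i) = 0. -/
open Finset

attribute [local instance] Classical.propDecidable

/-!
Put `N = n - 2m`. The weight `C(N,i) / C(n,m+i)` is proportional to `C(m+i,m) C(m+N-i,m)`, and
multiplying `T^{(ℓ)}(i)` by the latter gives, up to a constant, the Rodrigues-type sum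
`∑ⱼ (-1)ʲ C(ℓ,j) C(m+i,m+j) C(m+N-i,m+ℓ-j)`. Summed over `i` against `C(i,d)`, Vandermonde's
identity turns the `j`-th term into a polynomial of degree `≤ d` in `j`, which the alternating
sum kills when `d < ℓ`. So `T^{(ℓ)}` is orthogonal to every polynomial in `i` of degree `< ℓ`,
while `T^{(ℓ)}(i)` is itself a polynomial of degree `≤ ℓ` in `i`.
-/

open Polynomial
open scoped fwdDiff

section FiniteDifferences

variable {R : Type*} [CommRing R]

theorem Polynomial.eval_natCast_eq_sum_choose_mul_fwdDiff {P : R[X]} {n : ℕ}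
    (hP : P.natDegree < n) (i : ℕ) :
    P.eval (i : R) = ∑ d ∈ range n, (i.choose d : R) * Δ_[1] ^[d] P.eval 0 := by
  have hnewton := shift_eq_sum_fwdDiff_iter (1 : R) P.eval i 0
  simp only [zero_add, nsmul_eq_mul, mul_one] at hnewton
  rw [hnewton]
  calc _ = ∑ d ∈ range (i + 1 + n), (i.choose d : R) * Δ_[1] ^[d] P.eval 0 :=
        sum_subset (range_subset_range.2 (by omega)) fun d hd hd' => by
          simp only [mem_range, not_lt] at hd hd'
          rw [Nat.choose_eq_zero_of_lt (by omega), Nat.cast_zero, zero_mul]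
    _ = _ := (sum_subset (range_subset_range.2 (by omega)) fun d hd hd' => by
          simp only [mem_range, not_lt] at hd hd'
          rw [fwdDiff_iter_eq_zero_of_degree_lt (hP.trans_le hd'), Pi.zero_apply, mul_zero]).symm

theorem Polynomial.sum_range_neg_one_pow_mul_choose_mul_eval_eq_zero {P : R[X]} {n : ℕ}
    (hP : P.natDegree < n) :
    ∑ k ∈ range (n + 1), (-1 : R) ^ k * n.choose k * P.eval (k : R) = 0 := by
  have hdiff := congrFun (fwdDiff_iter_eq_zero_of_degree_lt hP) 0
  rw [fwdDiff_iter_eq_sum_shift, Pi.zero_apply] at hdiff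
  calc ∑ k ∈ range (n + 1), (-1 : R) ^ k * n.choose k * P.eval (k : R)
      = (-1) ^ n * ∑ k ∈ range (n + 1),
          ((-1 : ℤ) ^ (n - k) * n.choose k) • P.eval (0 + k • (1 : R)) := by
        rw [mul_sum]
        refine sum_congr rfl fun k hk => ?_
        have hsign : (-1 : R) ^ k = (-1) ^ n * (-1) ^ (n - k) := by
          rw [← pow_add, neg_one_pow_eq_pow_mod_two, neg_one_pow_eq_pow_mod_two (n := n + _)]
          congr 1
          rw [mem_range] at hk
          omega
        simp only [hsign, nsmul_eq_mul, mul_one, zero_add, zsmul_eq_mul, Int.cast_mul,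
          Int.cast_pow, Int.cast_neg, Int.cast_one, Int.cast_natCast]
        ring
    _ = 0 := by rw [hdiff, mul_zero]

end FiniteDifferences

section ChoosePoly

variable (K : Type*) [Field K]

noncomputable def choosePoly (k : ℕ) : K[X] := C (k.factorial : K)⁻¹ * descPochhammer K k

variable {K}

theorem choosePoly_eval_natCast [CharZero K] (k n : ℕ) :
    (choosePoly K k).eval (n : K) = n.choose k := by
  rw [choosePoly, eval_mul, eval_C, Nat.cast_choose_eq_descPochhammer_div, inv_mul_eq_div]

theorem natDegree_choosePoly_le (k : ℕ) : (choosePoly K k).natDegree ≤ k :=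
  (natDegree_C_mul_le _ _).trans (descPochhammer_natDegree K k).le

theorem natDegree_choosePoly_mul_comp_le (a b : ℕ) {q : K[X]} (hq : q.natDegree ≤ 1) :
    (choosePoly K a * (choosePoly K b).comp q).natDegree ≤ a + b := by
  refine natDegree_mul_le.trans (add_le_add (natDegree_choosePoly_le a) ?_)
  rw [natDegree_comp]
  exact (Nat.mul_le_mul (natDegree_choosePoly_le b) hq).trans_eq (mul_one b)

end ChoosePoly

namespace Nat

theorem choose_mul_add_choose (m i j : ℕ) :
    i.choose j * (m + i).choose m = (m + i).choose (m + j) * (m + j).choose m := by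
  rcases le_or_gt j i with hji | hij
  · have h := choose_mul (n := m + i) (k := m + j) (s := m) (by omega)
    rw [Nat.add_sub_cancel_left, Nat.add_sub_cancel_left] at h
    rw [h, mul_comm]
  · rw [choose_eq_zero_of_lt hij, choose_eq_zero_of_lt (by omega : m + i < m + j), zero_mul,
      zero_mul]

theorem choose_add_mul_choose_mul_choose (a b : ℕ) {ℓ j : ℕ} (hj : j ≤ ℓ) :
    (a + b + ℓ).choose (a + j) * (a + j).choose a * (b + (ℓ - j)).choose b =
      (a + b + ℓ).choose a * (b + ℓ).choose b * ℓ.choose j := by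
  have hleft : (a + b + ℓ).choose (a + j) * (a + j).choose a =
      (a + b + ℓ).choose a * (b + ℓ).choose j := by
    rw [choose_mul (by omega), show a + b + ℓ - a = b + ℓ by omega, Nat.add_sub_cancel_left]
  have hright : (b + ℓ).choose j * (b + (ℓ - j)).choose b = (b + ℓ).choose b * ℓ.choose j := by
    have h := choose_mul_add_choose b ℓ (ℓ - j)
    rw [choose_symm hj, choose_symm_of_eq_add (by omega : b + ℓ = b + (ℓ - j) + j)] at h
    rw [← h, mul_comm]
  rw [hleft, mul_assoc, hright, mul_assoc]

theorem sum_antidiagonal_choose_mul_choose (n a b : ℕ) :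
    ∑ p ∈ antidiagonal n, p.1.choose a * p.2.choose b = (n + 1).choose (a + b + 1) := by
  induction n generalizing a with
  | zero => rcases a with _ | a <;> rcases b with _ | b <;> simp [choose_eq_zero_of_lt]
  | succ n ih =>
    rw [Finset.Nat.sum_antidiagonal_succ]
    rcases a with _ | a
    · have h0 := ih 0
      simp only [choose_zero_right, one_mul, zero_add] at h0 ⊢
      rw [h0, choose_succ_succ' (n + 1) b]
    · simp only [choose_zero_succ, zero_mul, zero_add, choose_succ_succ' _ a, add_mul,
        sum_add_distrib, ih]
      rw [show a + 1 + b + 1 = a + b + 1 + 1 by omega, choose_succ_succ' (n + 1)]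

theorem sum_range_add_choose_mul_add_choose {m a b : ℕ} (ha : m ≤ a) (hb : m ≤ b) (N : ℕ) :
    ∑ i ∈ range (N + 1), (m + i).choose a * (m + (N - i)).choose b =
      (2 * m + N + 1).choose (a + b + 1) := by
  rw [← sum_antidiagonal_choose_mul_choose, Finset.Nat.sum_antidiagonal_eq_sum_range_succ
    (fun k l => k.choose a * l.choose b)]
  have hshift : ∑ i ∈ range (N + 1), (m + i).choose a * (m + (N - i)).choose b =
      ∑ k ∈ Ico m (m + N + 1), k.choose a * (2 * m + N - k).choose b := by
    rw [sum_Ico_eq_sum_range, show m + N + 1 - m = N + 1 by omega]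
    refine sum_congr rfl fun i hi => ?_
    rw [mem_range] at hi
    rw [show 2 * m + N - (m + i) = m + (N - i) by omega]
  rw [hshift]
  refine sum_subset (fun k hk => ?_) fun k hk hk' => ?_
  · simp only [mem_Ico, mem_range] at hk ⊢
    omega
  simp only [mem_range, mem_Ico, not_and_or, not_le, not_lt] at hk hk'
  rcases hk' with hk' | hk'
  · rw [choose_eq_zero_of_lt (by omega : k < a), zero_mul]
  · rw [choose_eq_zero_of_lt (by omega : 2 * m + N - k < b), mul_zero]

theorem choose_mul_add_choose_eq_sum (m i j d : ℕ) :
    i.choose d * (m + i).choose (m + j) = ∑ s ∈ range (d + 1),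
      j.choose (d - s) * (j + (m + s)).choose s * (m + i).choose (m + j + s) := by
  rcases le_or_gt j i with hji | hij
  · obtain ⟨k, rfl⟩ := Nat.exists_eq_add_of_le hji
    have hvandermonde : (j + k).choose d = ∑ s ∈ range (d + 1), k.choose s * j.choose (d - s) := by
      rw [add_comm, add_choose_eq,
        Finset.Nat.sum_antidiagonal_eq_sum_range_succ (fun s t => k.choose s * j.choose t)]
    rw [hvandermonde, sum_mul]
    refine sum_congr rfl fun s _ => ?_
    have h := choose_mul (n := m + (j + k)) (k := m + j + s) (s := m + j) (by omega)
    rw [show m + (j + k) - (m + j) = k by omega, Nat.add_sub_cancel_left, choose_symm_add] at h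
    rw [show j + (m + s) = m + j + s by omega]
    linear_combination j.choose (d - s) * h.symm
  · rw [choose_eq_zero_of_lt (by omega : m + i < m + j), mul_zero]
    exact (sum_eq_zero fun s _ => by
      rw [choose_eq_zero_of_lt (by omega : m + i < m + j + s), mul_zero]).symm

theorem sum_choose_mul_add_choose_mul_add_choose (m : ℕ) {ℓ j : ℕ} (hj : j ≤ ℓ) (N d : ℕ) :
    ∑ i ∈ range (N + 1),
        i.choose d * (m + i).choose (m + j) * (m + (N - i)).choose (m + (ℓ - j)) =
      ∑ s ∈ range (d + 1),
        j.choose (d - s) * (j + (m + s)).choose s * (2 * m + N + 1).choose (2 * m + ℓ + s + 1) := by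
  simp_rw [choose_mul_add_choose_eq_sum m _ j d, sum_mul]
  rw [sum_comm]
  refine sum_congr rfl fun s _ => ?_
  simp_rw [mul_assoc, ← mul_sum]
  rw [sum_range_add_choose_mul_add_choose (by omega) (by omega),
    show m + j + s + (m + (ℓ - j)) + 1 = 2 * m + ℓ + s + 1 by omega]

end Nat

section HahnOrthogonality

variable (m N : ℕ)

theorem Tcoef_eq_sum (ℓ i : ℕ) :
    Tcoef (2 * m + N) m ℓ i = ∑ j ∈ range (ℓ + 1),
      (-1 : ℝ) ^ (m + j) * (2 * m + ℓ).choose (m + j) * i.choose j * (N - i).choose (ℓ - j) := by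
  rw [Tcoef, show 2 * m + N - 2 * m = N by omega]
  calc _ = ∑ j ∈ range (i + ℓ + 1), if j ≤ ℓ then
          (-1 : ℝ) ^ (m + j) * (2 * m + ℓ).choose (m + j) * i.choose j * (N - i).choose (ℓ - j)
          else 0 :=
        sum_subset (range_subset_range.2 (by omega)) fun j _ hj => by
          rw [mem_range, not_lt] at hj
          rw [Nat.choose_eq_zero_of_lt (n := i) (k := j) hj]
          simp
    _ = _ := (sum_subset (range_subset_range.2 (by omega)) fun j _ hj =>
          if_neg (by rw [mem_range] at hj; omega)).symm
    _ = _ := sum_congr rfl fun j hj => if_pos (Nat.lt_succ_iff.1 (mem_range.1 hj))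

theorem exists_polynomial_eval_eq_Tcoef (ℓ : ℕ) :
    ∃ P : ℝ[X], P.natDegree ≤ ℓ ∧ ∀ i ≤ N, P.eval (i : ℝ) = Tcoef (2 * m + N) m ℓ i := by
  have hlin : (C (N : ℝ) - X).natDegree ≤ 1 := (natDegree_sub_le _ _).trans (by simp)
  refine ⟨∑ j ∈ range (ℓ + 1), C ((-1 : ℝ) ^ (m + j) * (2 * m + ℓ).choose (m + j)) *
      (choosePoly ℝ j * (choosePoly ℝ (ℓ - j)).comp (C (N : ℝ) - X)), ?_, fun i hi => ?_⟩
  · refine natDegree_sum_le_of_forall_le _ _ fun j hj => (natDegree_C_mul_le _ _).trans ?_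
    exact (natDegree_choosePoly_mul_comp_le j (ℓ - j) hlin).trans
      (by rw [mem_range] at hj; omega)
  · rw [Tcoef_eq_sum, eval_finsetSum]
    refine sum_congr rfl fun j _ => ?_
    rw [eval_mul, eval_C, eval_mul, eval_comp, eval_sub, eval_C, eval_X, ← Nat.cast_sub hi,
      choosePoly_eval_natCast, choosePoly_eval_natCast]
    ring

theorem Tcoef_mul_choose_mul_choose (ℓ i : ℕ) :
    Tcoef (2 * m + N) m ℓ i * (m + i).choose m * (m + (N - i)).choose m =
      (-1) ^ m * (2 * m + ℓ).choose m * (m + ℓ).choose m * ∑ j ∈ range (ℓ + 1), (-1 : ℝ) ^ j *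
        ℓ.choose j * (m + i).choose (m + j) * (m + (N - i)).choose (m + (ℓ - j)) := by
  rw [Tcoef_eq_sum, sum_mul, sum_mul, mul_sum]
  refine sum_congr rfl fun j hj => ?_
  replace hj : j ≤ ℓ := Nat.lt_succ_iff.1 (mem_range.1 hj)
  have key : (2 * m + ℓ).choose (m + j) * (i.choose j * (m + i).choose m) *
      ((N - i).choose (ℓ - j) * (m + (N - i)).choose m) =
      (2 * m + ℓ).choose m * (m + ℓ).choose m * ℓ.choose j * (m + i).choose (m + j) *
        (m + (N - i)).choose (m + (ℓ - j)) := by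
    rw [Nat.choose_mul_add_choose, Nat.choose_mul_add_choose, two_mul,
      ← Nat.choose_add_mul_choose_mul_choose m m hj]
    ring
  have key' := congrArg (Nat.cast : ℕ → ℝ) key
  push_cast at key'
  rw [pow_add]
  linear_combination (-1 : ℝ) ^ m * (-1) ^ j * key'

theorem choose_div_choose_eq {i : ℕ} (hi : i ≤ N) :
    (N.choose i : ℝ) / (2 * m + N).choose (m + i) =
      (m + i).choose m * (m + (N - i)).choose m / ((2 * m + N).choose m * (m + N).choose m) := by
  have key := congrArg (Nat.cast : ℕ → ℝ) (Nat.choose_add_mul_choose_mul_choose m m hi)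
  rw [← two_mul] at key
  push_cast at key
  have hne : ∀ {a b : ℕ}, a ≤ b → (b.choose a : ℝ) ≠ 0 := fun h =>
    Nat.cast_ne_zero.2 (Nat.choose_pos h).ne'
  rw [div_eq_div_iff (hne (by omega)) (mul_ne_zero (hne (by omega)) (hne (by omega)))]
  linear_combination -key

theorem exists_polynomial_eval_eq_sum_choose_mul_choose_mul_choose (ℓ d : ℕ) :
    ∃ Q : ℝ[X], Q.natDegree ≤ d ∧ ∀ j ≤ ℓ, Q.eval (j : ℝ) = ∑ i ∈ range (N + 1),
      (i.choose d * (m + i).choose (m + j) * (m + (N - i)).choose (m + (ℓ - j)) : ℝ) := by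
  refine ⟨∑ s ∈ range (d + 1), C ((2 * m + N + 1).choose (2 * m + ℓ + s + 1) : ℝ) *
      (choosePoly ℝ (d - s) * (choosePoly ℝ s).comp (X + C ((m + s : ℕ) : ℝ))), ?_,
      fun j hj => ?_⟩
  · refine natDegree_sum_le_of_forall_le _ _ fun s hs => (natDegree_C_mul_le _ _).trans ?_
    exact (natDegree_choosePoly_mul_comp_le _ _ (natDegree_X_add_C _).le).trans
      (by rw [mem_range] at hs; omega)
  · have h := congrArg (Nat.cast : ℕ → ℝ) (Nat.sum_choose_mul_add_choose_mul_add_choose m hj N d)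
    push_cast at h
    rw [h, eval_finsetSum]
    refine sum_congr rfl fun s _ => ?_
    rw [eval_mul, eval_C, eval_mul, eval_comp, eval_add, eval_X, eval_C, ← Nat.cast_add,
      choosePoly_eval_natCast, choosePoly_eval_natCast]
    ring

theorem sum_choose_mul_Tcoef_mul_choose_mul_choose_eq_zero {ℓ d : ℕ} (hd : d < ℓ) :
    ∑ i ∈ range (N + 1), (i.choose d : ℝ) *
      (Tcoef (2 * m + N) m ℓ i * (m + i).choose m * (m + (N - i)).choose m) = 0 := by
  obtain ⟨Q, hQdeg, hQ⟩ := exists_polynomial_eval_eq_sum_choose_mul_choose_mul_choose m N ℓ d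
  calc _ = (-1) ^ m * (2 * m + ℓ).choose m * (m + ℓ).choose m *
        ∑ j ∈ range (ℓ + 1), (-1 : ℝ) ^ j * ℓ.choose j * Q.eval (j : ℝ) := by
        simp_rw [Tcoef_mul_choose_mul_choose, mul_sum]
        rw [sum_comm]
        refine sum_congr rfl fun j hj => ?_
        rw [hQ j (Nat.lt_succ_iff.1 (mem_range.1 hj)), mul_sum, mul_sum]
        exact sum_congr rfl fun i _ => by ring
    _ = 0 := by
        rw [sum_range_neg_one_pow_mul_choose_mul_eval_eq_zero (hQdeg.trans_lt hd), mul_zero]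

theorem sum_eval_mul_Tcoef_mul_choose_div_choose_eq_zero {P : ℝ[X]} {ℓ : ℕ}
    (hP : P.natDegree < ℓ) :
    ∑ i ∈ range (N + 1), P.eval (i : ℝ) * Tcoef (2 * m + N) m ℓ i *
      ((N.choose i : ℝ) / (2 * m + N).choose (m + i)) = 0 := by
  have hterm : ∀ i ∈ range (N + 1), P.eval (i : ℝ) * Tcoef (2 * m + N) m ℓ i *
      ((N.choose i : ℝ) / (2 * m + N).choose (m + i)) =
      ∑ d ∈ range ℓ, Δ_[1] ^[d] P.eval 0 / ((2 * m + N).choose m * (m + N).choose m) *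
        ((i.choose d : ℝ) * (Tcoef (2 * m + N) m ℓ i * (m + i).choose m *
          (m + (N - i)).choose m)) := by
    intro i hi
    rw [choose_div_choose_eq m N (Nat.lt_succ_iff.1 (mem_range.1 hi)),
      P.eval_natCast_eq_sum_choose_mul_fwdDiff hP, sum_mul, sum_mul]
    exact sum_congr rfl fun d _ => by ring
  rw [sum_congr rfl hterm, sum_comm]
  exact sum_eq_zero fun d hd => by
    rw [← mul_sum, sum_choose_mul_Tcoef_mul_choose_mul_choose_eq_zero m N (mem_range.1 hd),
      mul_zero]

end HahnOrthogonality

theorem Tcoef_orthogonality_general (n m ℓ₁ ℓ₂ : ℕ) (hm : 2 * m ≤ n) (hne : ℓ₁ ≠ ℓ₂) :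
    ∑ i ∈ Finset.range (n - 2 * m + 1),
        Tcoef n m ℓ₁ i * Tcoef n m ℓ₂ i * (((n - 2 * m).choose i : ℝ) / (n.choose (m + i))) =
      0 := by
  obtain ⟨N, rfl⟩ : ∃ N, n = 2 * m + N := ⟨n - 2 * m, by omega⟩
  rw [show 2 * m + N - 2 * m = N by omega]
  wlog hlt : ℓ₁ < ℓ₂ generalizing ℓ₁ ℓ₂
  · rw [← this ℓ₂ ℓ₁ hne.symm (by omega)]
    exact sum_congr rfl fun i _ => by ring
  obtain ⟨P, hPdeg, hP⟩ := exists_polynomial_eval_eq_Tcoef m N ℓ₁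
  rw [← sum_eval_mul_Tcoef_mul_choose_div_choose_eq_zero m N (hPdeg.trans_lt hlt)]
  exact sum_congr rfl fun i hi => by rw [hP i (Nat.lt_succ_iff.1 (mem_range.1 hi))]

/-- orthogonality of the Hahn-type sums for ℓ₁ ≠ ℓ₂. -/
theorem Tcoef_orthogonality (n m ℓ₁ ℓ₂ : ℕ) (hm : 2 * m ≤ n)
    (h1 : ℓ₁ ≤ n - 2 * m) (h2 : ℓ₂ ≤ n - 2 * m) (hne : ℓ₁ ≠ ℓ₂) :
    ∑ i ∈ Finset.range (n - 2 * m + 1),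
        Tcoef n m ℓ₁ i * Tcoef n m ℓ₂ i * (((n - 2 * m).choose i : ℝ) / (n.choose (m + i))) =
      0 :=
  Tcoef_orthogonality_general n m ℓ₁ ℓ₂ hm hne
end

section
/- For every 0 ≤ m ≤ ⌊n/2⌋ and 0 ≤ ℓ ≤ n−2m, the identity f_T^{m,ℓ} = Σ_{S ⊆ {1,…,n}} g_T^{m,ℓ}(S) · f_S holds; that is, for every subset U ⊆ {1,…,n}, f_T^{m,ℓ}(U) = Σ_{S ⊆ {1,…,n}} g_T^{m,ℓ}(S) · (−1)^{|S∩U|} C(|S|, |S∩U|). -/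
open Finset

attribute [local instance] Classical.propDecidable

/-!
Both `g_T^{m,i}` and `f_T^{m,ℓ}` are the sign `pairSign m` of the pattern on the pairs
`{2r - 1, 2r}`, `r ≤ m`, times a function of the size of the part in the tail `{2m + 1, …, n}`.
Splitting `S = A ∪ B` accordingly, the sum over `A ⊆ {1, …, 2m}` is computed by induction on
`m`: of the four ways a set can meet a new pair, only the two taking exactly one element survive,
and Pascal's rule merges their binomials, leaving `(-1)^m pairSign m U · C(2m + ℓ, m + #(B ∩ U))`.
The remaining sum over the `ℓ`-subsets `B` of the tail depends only on `j = #(B ∩ U)`, and there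
are `C(i, j) C(n - 2m - i, ℓ - j)` such `B` with `i = #(U ∩ tail)`: this is `T_{m,n}^{(ℓ)}(i)`.
-/

theorem Finset.sum_powerset_union_of_disjoint {α β : Type*} [DecidableEq α] [AddCommMonoid β]
    {s t : Finset α} (hst : Disjoint s t) (f : Finset α → β) :
    ∑ S ∈ (s ∪ t).powerset, f S = ∑ A ∈ s.powerset, ∑ B ∈ t.powerset, f (A ∪ B) := by
  have hparts : ∀ p ∈ s.powerset ×ˢ t.powerset, (p.1 ∪ p.2) ∩ s = p.1 ∧ (p.1 ∪ p.2) ∩ t = p.2 := by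
    rintro ⟨A, B⟩ h
    rw [mem_product, mem_powerset, mem_powerset] at h
    simp only [union_inter_distrib_right, inter_eq_left.2 h.1, inter_eq_left.2 h.2,
      disjoint_iff_inter_eq_empty.1 (hst.mono_right h.2).symm,
      disjoint_iff_inter_eq_empty.1 (hst.mono_left h.1), union_empty, empty_union, and_self]
  rw [powerset_union, ← image_sup_product, sum_image, sum_product]
  · rfl
  intro p hp q hq h
  simp only [sup_eq_union] at h
  exact Prod.ext (by rw [← (hparts p hp).1, ← (hparts q hq).1]; exact congrArg (· ∩ s) h)
    (by rw [← (hparts p hp).2, ← (hparts q hq).2]; exact congrArg (· ∩ t) h)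

theorem Finset.sum_range_choose_smul_ite_add_eq {R : Type*} [AddCommMonoid R] (N a ℓ : ℕ) (h : R) :
    ∑ k ∈ range (N + 1), N.choose k • (if a + k = ℓ then h else 0) =
      if a ≤ ℓ then N.choose (ℓ - a) • h else 0 := by
  split_ifs with ha
  · rw [sum_eq_single (ℓ - a)]
    · rw [if_pos (by omega)]
    · intro k _ hk; rw [if_neg (by omega), smul_zero]
    · intro hk
      rw [Nat.choose_eq_zero_of_lt (by simp at hk; omega), zero_smul]
  · exact sum_eq_zero fun k _ => by rw [if_neg (by omega), smul_zero]

theorem Finset.sum_powerset_ite_card_eq {α R : Type*} [DecidableEq α] [CommSemiring R]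
    (D U : Finset α) (ℓ : ℕ) (H : ℕ → R) :
    ∑ B ∈ D.powerset, (if #B = ℓ then H #(B ∩ U) else 0) =
      ∑ j ∈ range (#(U ∩ D) + 1),
        if j ≤ ℓ then H j * (#(U ∩ D)).choose j * (#D - #(U ∩ D)).choose (ℓ - j) else 0 := by
  have hterm : ∀ A ∈ (D ∩ U).powerset, ∀ C ∈ (D \ U).powerset,
      (if #(C ∪ A) = ℓ then H #((C ∪ A) ∩ U) else 0) = if #A + #C = ℓ then H #A else 0 := by
    intro A hA C hC
    rw [mem_powerset, subset_inter_iff] at hA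
    rw [mem_powerset, subset_sdiff] at hC
    rw [union_inter_distrib_right, disjoint_iff_inter_eq_empty.1 hC.2, empty_union,
      inter_eq_left.2 hA.2, card_union_of_disjoint (hC.2.mono_right hA.2), add_comm]
  rw [← sdiff_union_inter D U, sum_powerset_union_of_disjoint (disjoint_sdiff_inter D U), sum_comm,
    sdiff_union_inter, sum_congr rfl fun A hA => sum_congr rfl (hterm A hA),
    sum_congr rfl fun A _ => sum_powerset_apply_card (fun k => if #A + k = ℓ then H #A else 0),
    sum_congr rfl fun A _ => sum_range_choose_smul_ite_add_eq _ _ _ _,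
    sum_powerset_apply_card (fun a => if a ≤ ℓ then (#(D \ U)).choose (ℓ - a) • H a else 0),
    card_sdiff, inter_comm D U]
  refine sum_congr rfl fun j _ => ?_
  split_ifs
  · rw [nsmul_eq_mul, nsmul_eq_mul]; ring
  · rw [smul_zero]

noncomputable def pairSign (m : ℕ) (S : Finset ℕ) : ℝ :=
  if ∀ r ∈ Icc 1 m, (2 * r - 1 ∈ S ↔ ¬(2 * r ∈ S)) then
    (-1 : ℝ) ^ #(S ∩ (range m).image (fun r => 2 * r + 1))
  else 0

/-- The factor of `pairSign (m + 1)` coming from its last pair `{2m + 1, 2m + 2}`. -/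
noncomputable def pairSignAt (m : ℕ) (S : Finset ℕ) : ℝ :=
  if (2 * m + 1 ∈ S ↔ ¬(2 * m + 2 ∈ S)) then (if 2 * m + 1 ∈ S then -1 else 1) else 0

theorem gT_eq_pairSign_mul (n m i : ℕ) (S : Finset ℕ) :
    gT n m i S = pairSign m S * if (S ∩ Icc (2 * m + 1) n).card = i then 1 else 0 := by
  unfold gT pairSign
  split_ifs <;> simp_all

theorem pairSign_union_of_lt (m : ℕ) {A B : Finset ℕ} (hB : ∀ x ∈ B, 2 * m < x) :
    pairSign m (A ∪ B) = pairSign m A := by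
  have hmem : ∀ x ≤ 2 * m, (x ∈ A ∪ B ↔ x ∈ A) := fun x hx =>
    ⟨fun h => (mem_union.1 h).resolve_right fun hxB => by have := hB x hxB; omega,
      mem_union_left B⟩
  have hodd : (A ∪ B) ∩ (range m).image (fun r => 2 * r + 1) =
      A ∩ (range m).image (fun r => 2 * r + 1) := by
    ext x
    simp only [mem_inter, mem_image, mem_range]
    constructor
    · rintro ⟨hx, r, hr, rfl⟩; exact ⟨(hmem _ (by omega)).1 hx, r, hr, rfl⟩
    · rintro ⟨hx, r, hr, rfl⟩; exact ⟨(hmem _ (by omega)).2 hx, r, hr, rfl⟩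
  have hpairs : ∀ r ∈ Icc 1 m, ((2 * r - 1 ∈ A ∪ B ↔ ¬(2 * r ∈ A ∪ B)) ↔
      (2 * r - 1 ∈ A ↔ ¬(2 * r ∈ A))) := fun r hr => by
    rw [mem_Icc] at hr
    rw [hmem _ (by omega), hmem _ (by omega)]
  unfold pairSign
  rw [hodd]
  exact if_congr (forall₂_congr hpairs) rfl rfl

theorem pairSign_succ (m : ℕ) (S : Finset ℕ) :
    pairSign (m + 1) S = pairSign m S * pairSignAt m S := by
  have hIcc : ∀ P : ℕ → Prop, (∀ r ∈ Icc 1 (m + 1), P r) ↔ (∀ r ∈ Icc 1 m, P r) ∧ P (m + 1) :=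
    fun P => by
      rw [← insert_Icc_right_eq_Icc_add_one (by omega), forall_mem_insert, and_comm]
  have hodd : (range (m + 1)).image (fun r => 2 * r + 1) =
      insert (2 * m + 1) ((range m).image (fun r => 2 * r + 1)) := by
    rw [range_add_one, image_insert]
  have hnot : 2 * m + 1 ∉ (range m).image (fun r => 2 * r + 1) := by
    simp only [mem_image, mem_range, not_exists, not_and]; omega
  unfold pairSign pairSignAt
  rw [if_congr (hIcc _) rfl rfl, hodd, show 2 * (m + 1) - 1 = 2 * m + 1 by omega,
    show 2 * (m + 1) = 2 * m + 2 by omega]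
  by_cases ho : 2 * m + 1 ∈ S
  · rw [inter_insert_of_mem ho, card_insert_of_notMem (fun h => hnot (mem_inter.1 h).2)]
    split_ifs <;> simp_all [pow_succ]
  · rw [inter_insert_of_notMem ho]
    split_ifs <;> simp_all

theorem pairSign_insert_of_lt (m : ℕ) {x : ℕ} (S : Finset ℕ) (hx : 2 * m < x) :
    pairSign m (insert x S) = pairSign m S := by
  rw [insert_eq, union_comm]
  exact pairSign_union_of_lt m (by simpa using hx)

theorem card_insert_inter_of_notMem {α : Type*} [DecidableEq α] {x : α} {S : Finset α}
    (U : Finset α) (hx : x ∉ S) : #(insert x S ∩ U) = #(S ∩ U) + if x ∈ U then 1 else 0 := by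
  split_ifs with hxU
  · rw [insert_inter_of_mem hxU, card_insert_of_notMem fun h => hx (mem_inter.1 h).1]
  · rw [insert_inter_of_notMem hxU, add_zero]

theorem pairSign_pair_step (m N b : ℕ) {S : Finset ℕ} (U : Finset ℕ) (hS : S ⊆ Icc 1 (2 * m)) :
    let f : Finset ℕ → ℝ := fun T =>
      pairSign (m + 1) T * ((-1) ^ #(T ∩ U) * ((#T + N).choose (#(T ∩ U) + b) : ℝ))
    f S + f (insert (2 * m + 1) S) +
        (f (insert (2 * m + 2) S) + f (insert (2 * m + 2) (insert (2 * m + 1) S))) =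
      -pairSignAt m U *
        (pairSign m S * ((-1) ^ #(S ∩ U) * ((#S + (N + 2)).choose (#(S ∩ U) + (b + 1)) : ℝ))) := by
  intro f
  have ho : 2 * m + 1 ∉ S := fun h => by have := (mem_Icc.1 (hS h)).2; omega
  have he : 2 * m + 2 ∉ S := fun h => by have := (mem_Icc.1 (hS h)).2; omega
  have hneither : pairSignAt m S = 0 := by simp [pairSignAt, ho, he]
  have hboth : pairSignAt m (insert (2 * m + 2) (insert (2 * m + 1) S)) = 0 := by
    simp [pairSignAt]
  have hodd : pairSignAt m (insert (2 * m + 1) S) = -1 := by simp [pairSignAt, he]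
  have heven : pairSignAt m (insert (2 * m + 2) S) = 1 := by simp [pairSignAt, ho]
  have hpascal : ∀ c : ℕ, ((#S + (N + 2)).choose (c + (b + 1)) : ℝ) =
      (#S + 1 + N).choose (c + b) + (#S + 1 + N).choose (c + 1 + b) := fun c => by
    rw [show #S + (N + 2) = #S + 1 + N + 1 by omega, show c + (b + 1) = c + b + 1 by omega,
      Nat.choose_succ_succ', show c + 1 + b = c + b + 1 by omega]
    push_cast; ring
  simp only [f, pairSign_succ, hneither, hboth, hodd, heven, mul_zero, zero_mul, zero_add,
    add_zero, pairSign_insert_of_lt m _ (show 2 * m < 2 * m + 1 by omega),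
    pairSign_insert_of_lt m _ (show 2 * m < 2 * m + 2 by omega),
    card_insert_inter_of_notMem U ho, card_insert_inter_of_notMem U he,
    card_insert_of_notMem ho, card_insert_of_notMem he, hpascal]
  unfold pairSignAt
  by_cases hoU : 2 * m + 1 ∈ U <;> by_cases heU : 2 * m + 2 ∈ U <;>
    simp only [hoU, heU, if_true, if_false, iff_self, not_true_eq_false, not_false_eq_true,
      iff_true, iff_false, add_zero] <;> ring

theorem sum_pairSign_mul_choose (m : ℕ) (U : Finset ℕ) (N b : ℕ) :
    ∑ S ∈ (Icc 1 (2 * m)).powerset,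
        pairSign m S * ((-1) ^ #(S ∩ U) * ((#S + N).choose (#(S ∩ U) + b) : ℝ)) =
      (-1) ^ m * pairSign m U * (N + 2 * m).choose (b + m) := by
  induction m generalizing N b with
  | zero => simp [pairSign]
  | succ m ih =>
    have hIcc : Icc 1 (2 * (m + 1)) = insert (2 * m + 2) (insert (2 * m + 1) (Icc 1 (2 * m))) := by
      ext x; simp only [mem_insert, mem_Icc]; omega
    have he : 2 * m + 2 ∉ insert (2 * m + 1) (Icc 1 (2 * m)) := by simp
    have ho : 2 * m + 1 ∉ Icc 1 (2 * m) := by simp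
    rw [hIcc, sum_powerset_insert he, sum_powerset_insert ho, sum_powerset_insert ho,
      ← sum_add_distrib, ← sum_add_distrib, ← sum_add_distrib,
      sum_congr rfl fun S hS => pairSign_pair_step m N b U (mem_powerset.1 hS), ← mul_sum, ih,
      pairSign_succ]
    rw [show N + 2 + 2 * m = N + 2 * (m + 1) by omega, show b + 1 + m = b + (m + 1) by omega]
    ring

theorem fT_eq_pairSign_mul_Tcoef (n m ℓ : ℕ) (U : Finset ℕ) :
    fT n m ℓ U = pairSign m U * Tcoef n m ℓ #(U ∩ Icc (2 * m + 1) n) := by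
  have hle : #(U ∩ Icc (2 * m + 1) n) ≤ n - 2 * m := by
    have := card_le_card (inter_subset_right (s₁ := U) (s₂ := Icc (2 * m + 1) n))
    simp only [Nat.card_Icc] at this; omega
  unfold fT
  simp only [gT_eq_pairSign_mul]
  rw [sum_eq_single_of_mem #(U ∩ Icc (2 * m + 1) n) (mem_range.2 (by omega))
    fun i _ hi => by rw [if_neg (Ne.symm hi)]; ring, if_pos rfl]
  ring

theorem gT_mul_fSvec_union (n m ℓ : ℕ) {A B : Finset ℕ} (U : Finset ℕ) (hA : A ⊆ Icc 1 (2 * m))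
    (hB : B ⊆ Icc (2 * m + 1) n) :
    gT n m ℓ (A ∪ B) * fSvec (A ∪ B) U =
      (if #B = ℓ then (-1) ^ #(B ∩ U) else 0) *
        (pairSign m A * ((-1) ^ #(A ∩ U) * ((#A + ℓ).choose (#(A ∩ U) + #(B ∩ U)) : ℝ))) := by
  have hBgt : ∀ x ∈ B, 2 * m < x := fun x hx => by have := (mem_Icc.1 (hB hx)).1; omega
  have hAD : Disjoint A (Icc (2 * m + 1) n) := disjoint_left.2 fun x hxA hxD => by
    have := (mem_Icc.1 (hA hxA)).2; have := (mem_Icc.1 hxD).1; omega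
  have hAB : Disjoint A B := hAD.mono_right hB
  have htail : (A ∪ B) ∩ Icc (2 * m + 1) n = B := by
    rw [union_inter_distrib_right, inter_eq_left.2 hB, disjoint_iff_inter_eq_empty.1 hAD,
      empty_union]
  rw [gT_eq_pairSign_mul, htail, pairSign_union_of_lt m hBgt, fSvec, union_inter_distrib_right,
    card_union_of_disjoint hAB,
    card_union_of_disjoint (hAB.mono inter_subset_left inter_subset_left)]
  split_ifs with hBℓ
  · rw [hBℓ, pow_add]; ring
  · ring

theorem fT_eq_sum_gT_fS_general (n m ℓ : ℕ) (hm : 2 * m ≤ n)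
    (U : Finset ℕ) :
    fT n m ℓ U = ∑ S ∈ (Finset.Icc 1 n).powerset, gT n m ℓ S * fSvec S U := by
  set D := Icc (2 * m + 1) n
  have hsplit : Icc 1 n = Icc 1 (2 * m) ∪ D := by ext x; simp only [D, mem_union, mem_Icc]; omega
  have hdisj : Disjoint (Icc 1 (2 * m)) D :=
    disjoint_left.2 fun x hx hx' => by simp only [D, mem_Icc] at hx hx'; omega
  calc fT n m ℓ U = pairSign m U * Tcoef n m ℓ #(U ∩ D) := fT_eq_pairSign_mul_Tcoef n m ℓ U
    _ = ∑ B ∈ D.powerset, if #B = ℓ then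
          pairSign m U * ((-1) ^ (m + #(B ∩ U)) * ((2 * m + ℓ).choose (m + #(B ∩ U)) : ℝ))
          else 0 := by
      rw [sum_powerset_ite_card_eq D U ℓ
          fun j => pairSign m U * ((-1) ^ (m + j) * ((2 * m + ℓ).choose (m + j) : ℝ)),
        Tcoef, mul_sum, Nat.card_Icc,
        show n + 1 - (2 * m + 1) - #(U ∩ D) = n - 2 * m - #(U ∩ D) by omega]
      refine sum_congr rfl fun j _ => ?_
      split_ifs <;> ring
    _ = ∑ B ∈ D.powerset, ∑ A ∈ (Icc 1 (2 * m)).powerset, gT n m ℓ (A ∪ B) * fSvec (A ∪ B) U := by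
      refine sum_congr rfl fun B hB => ?_
      rw [sum_congr rfl fun A hA =>
          gT_mul_fSvec_union n m ℓ U (mem_powerset.1 hA) (mem_powerset.1 hB),
        ← mul_sum, sum_pairSign_mul_choose]
      split_ifs
      · rw [show ℓ + 2 * m = 2 * m + ℓ by ring, add_comm #(B ∩ U) m]; ring
      · ring
    _ = ∑ S ∈ (Icc 1 n).powerset, gT n m ℓ S * fSvec S U := by
      rw [hsplit, sum_powerset_union_of_disjoint hdisj, sum_comm]

/-- f_T^{m,ℓ} = Σ_{S ⊆ {1,…,n}} g_T^{m,ℓ}(S) · f_S, pointwise on subsets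
U ⊆ {1,…,n}. -/
theorem fT_eq_sum_gT_fS (n m ℓ : ℕ) (hm : 2 * m ≤ n) (hℓ : ℓ ≤ n - 2 * m)
    (U : Finset ℕ) (hU : U ⊆ Finset.Icc 1 n) :
    fT n m ℓ U = ∑ S ∈ (Finset.Icc 1 n).powerset, gT n m ℓ S * fSvec S U :=
  fT_eq_sum_gT_fS_general n m ℓ hm U
end

section
/- Let n ≥ 2 and 1 ≤ j ≤ n−1. Let D = M_j − M_{j+1} as a linear endomorphism of the space of functions C_2^n → ℝ, and assume D is invertible. Define τ_j = s_j + D^{−1}, where s_j acts as the operator induced by the adjacent transposition (j, j+1). Then: (i) τ_j ∘ M_j = M_{j+1} ∘ τ_j; (ii) M_j ∘ τ_j = τ_j ∘ M_{j+1}; (iii) τ_j ∘ τ_j = id − D^{−1} ∘ D^{−1} (equivalently, τ_j² = (D+1)(D−1)D^{−2}). -/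
open Finset

attribute [local instance] Classical.propDecidable

lemma swap_prop {n a b : ℕ} (ha : a ∈ Finset.Icc 1 n) (hb : b ∈ Finset.Icc 1 n) :
    ∀ x ∈ Finset.Icc 1 n, Equiv.swap a b x ∈ Finset.Icc 1 n := by
  intro x hx
  rcases eq_or_ne x a with rfl | hxa
  · rwa [Equiv.swap_apply_left]
  rcases eq_or_ne x b with rfl | hxb
  · rwa [Equiv.swap_apply_right]
  · rwa [Equiv.swap_apply_of_ne_of_ne hxa hxb]

lemma image_mem {n : ℕ} (σ : ℕ → ℕ) (hσ : ∀ x ∈ Finset.Icc 1 n, σ x ∈ Finset.Icc 1 n)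
    {U : Finset ℕ} (hU : U ∈ (Finset.Icc 1 n).powerset) :
    U.image σ ∈ (Finset.Icc 1 n).powerset := by
  rw [Finset.mem_powerset] at *
  intro x hx
  rw [Finset.mem_image] at hx
  obtain ⟨y, hy, rfl⟩ := hx
  exact hσ y (hU hy)

lemma transpEndo_apply {n a b : ℕ} (ha : a ∈ Finset.Icc 1 n) (hb : b ∈ Finset.Icc 1 n)
    (f : (↥((Finset.Icc 1 n).powerset)) → ℝ) (U : ↥((Finset.Icc 1 n).powerset)) :
    transpEndo n a b f U
      = f ⟨U.1.image (Equiv.swap a b), image_mem _ (swap_prop ha hb) U.2⟩ := by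
  simp only [transpEndo, LinearMap.coe_mk, AddHom.coe_mk,
    dif_pos (image_mem _ (swap_prop ha hb) U.2)]

lemma mul_transp_apply {n a b c d : ℕ} (ha : a ∈ Finset.Icc 1 n) (hb : b ∈ Finset.Icc 1 n)
    (hc : c ∈ Finset.Icc 1 n) (hd : d ∈ Finset.Icc 1 n)
    (f : (↥((Finset.Icc 1 n).powerset)) → ℝ) (U : ↥((Finset.Icc 1 n).powerset))
    {V : Finset ℕ} (hV : V ∈ (Finset.Icc 1 n).powerset)
    (hVeq : V = U.1.image (⇑(Equiv.swap a b * Equiv.swap c d))) :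
    (transpEndo n c d * transpEndo n a b) f U = f ⟨V, hV⟩ := by
  have h1 : (transpEndo n c d * transpEndo n a b) f U
      = (transpEndo n a b f) ⟨U.1.image (Equiv.swap c d), image_mem _ (swap_prop hc hd) U.2⟩ := by
    rw [Module.End.mul_apply]
    exact transpEndo_apply hc hd _ U
  rw [h1, transpEndo_apply ha hb]
  congr 1
  apply Subtype.ext
  simp only [hVeq, Finset.image_image]
  rfl

lemma transp_mul_congr (n : ℕ) {a b c d a' b' c' d' : ℕ}
    (ha : a ∈ Finset.Icc 1 n) (hb : b ∈ Finset.Icc 1 n)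
    (hc : c ∈ Finset.Icc 1 n) (hd : d ∈ Finset.Icc 1 n)
    (ha' : a' ∈ Finset.Icc 1 n) (hb' : b' ∈ Finset.Icc 1 n)
    (hc' : c' ∈ Finset.Icc 1 n) (hd' : d' ∈ Finset.Icc 1 n)
    (hperm : Equiv.swap a b * Equiv.swap c d = Equiv.swap a' b' * Equiv.swap c' d') :
    transpEndo n c d * transpEndo n a b = transpEndo n c' d' * transpEndo n a' b' := by
  apply LinearMap.ext; intro f; funext U
  have hm : U.1.image (⇑(Equiv.swap a b * Equiv.swap c d)) ∈ (Finset.Icc 1 n).powerset := by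
    apply image_mem _ _ U.2
    intro x hx
    exact swap_prop ha hb _ (swap_prop hc hd _ hx)
  rw [mul_transp_apply ha hb hc hd f U hm rfl,
    mul_transp_apply ha' hb' hc' hd' f U hm (by rw [hperm])]

lemma transp_mul_self (n : ℕ) {a b : ℕ} (ha : a ∈ Finset.Icc 1 n) (hb : b ∈ Finset.Icc 1 n) :
    transpEndo n a b * transpEndo n a b = 1 := by
  apply LinearMap.ext; intro f; funext U
  rw [mul_transp_apply ha hb ha hb f U U.2 (by
    rw [Equiv.swap_mul_self]; simp), Module.End.one_apply]


section rel
variable {n j : ℕ} (hj1 : 1 ≤ j) (hjn : j + 1 ≤ n)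

lemma memj (hj1 : 1 ≤ j) (hjn : j + 1 ≤ n) : j ∈ Finset.Icc 1 n := by
  simp only [Finset.mem_Icc]; omega

lemma memj1 (hjn : j + 1 ≤ n) : j + 1 ∈ Finset.Icc 1 n := by
  simp only [Finset.mem_Icc]; omega

lemma memi {i : ℕ} (hi : i ∈ Finset.Icc 1 (j - 1)) (hjn : j + 1 ≤ n) : i ∈ Finset.Icc 1 n := by
  simp only [Finset.mem_Icc] at *; omega

lemma icc_split (hj1 : 1 ≤ j) : Finset.Icc 1 j = insert j (Finset.Icc 1 (j - 1)) := by
  ext x; simp only [Finset.mem_Icc, Finset.mem_insert]; omega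

lemma not_mem_iccj (hj1 : 1 ≤ j) : j ∉ Finset.Icc 1 (j - 1) := by
  simp only [Finset.mem_Icc]; omega

-- s * M_j + 1 = M_{j+1} * s
lemma rel_sA (hj1 : 1 ≤ j) (hjn : j + 1 ≤ n) :
    transpEndo n j (j+1) * murphyEndo n j + 1 = murphyEndo n (j+1) * transpEndo n j (j+1) := by
  have hsj := memj hj1 hjn
  have hsj1 := memj1 hjn
  rw [murphyEndo, murphyEndo, Finset.mul_sum, Finset.sum_mul]
  simp only [Nat.add_sub_cancel]
  rw [icc_split hj1, Finset.sum_insert (not_mem_iccj hj1)]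
  rw [transp_mul_self n hsj hsj1, add_comm (1 : Module.End ℝ _)]
  congr 1
  apply Finset.sum_congr rfl
  intro i hi
  have hii := memi hi hjn
  have hilt : i < j := by simp only [Finset.mem_Icc] at hi; omega
  refine transp_mul_congr n hii hsj hsj hsj1 hsj hsj1 hii hsj1 ?_
  ext x
  simp only [Equiv.Perm.mul_apply, Equiv.swap_apply_def]
  split_ifs <;> omega

-- s * M_{j+1} = M_j * s + 1
lemma rel_sB (hj1 : 1 ≤ j) (hjn : j + 1 ≤ n) :
    transpEndo n j (j+1) * murphyEndo n (j+1) = murphyEndo n j * transpEndo n j (j+1) + 1 := by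
  have hsj := memj hj1 hjn
  have hsj1 := memj1 hjn
  rw [murphyEndo, murphyEndo, Finset.mul_sum, Finset.sum_mul]
  simp only [Nat.add_sub_cancel]
  rw [icc_split hj1, Finset.sum_insert (not_mem_iccj hj1)]
  rw [transp_mul_self n hsj hsj1, add_comm]
  congr 1
  apply Finset.sum_congr rfl
  intro i hi
  have hii := memi hi hjn
  have hilt : i < j := by simp only [Finset.mem_Icc] at hi; omega
  refine transp_mul_congr n hii hsj1 hsj hsj1 hsj hsj1 hii hsj ?_
  ext x
  simp only [Equiv.Perm.mul_apply, Equiv.swap_apply_def]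
  split_ifs <;> omega

-- M_j * M_{j+1} = M_{j+1} * M_j
lemma rel_comm (hj1 : 1 ≤ j) (hjn : j + 1 ≤ n) :
    murphyEndo n j * murphyEndo n (j+1) = murphyEndo n (j+1) * murphyEndo n j := by
  have hsj := memj hj1 hjn
  have hsj1 := memj1 hjn
  rw [murphyEndo, murphyEndo, Finset.sum_mul_sum, Finset.sum_mul_sum]
  simp only [Nat.add_sub_cancel]
  conv_rhs => rw [Finset.sum_comm]
  apply Finset.sum_congr rfl
  intro i hi
  have hii := memi hi hjn
  have hilt : i < j := by simp only [Finset.mem_Icc] at hi; omega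
  have hiIcc : i ∈ Finset.Icc 1 j := by simp only [Finset.mem_Icc] at *; omega
  rw [icc_split hj1, Finset.sum_insert (not_mem_iccj hj1), Finset.sum_insert (not_mem_iccj hj1)]
  have hiIcc' : i ∈ Finset.Icc 1 (j-1) := hi
  rw [← Finset.sum_erase_add _ _ hiIcc', ← Finset.sum_erase_add _ _ hiIcc']
  have hc1 : transpEndo n j (j+1) * transpEndo n i j
      = transpEndo n i j * transpEndo n i (j+1) := by
    refine transp_mul_congr n hii hsj hsj hsj1 hii hsj1 hii hsj ?_
    ext x
    simp only [Equiv.Perm.mul_apply, Equiv.swap_apply_def]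
    split_ifs <;> omega
  have hc2 : transpEndo n i (j+1) * transpEndo n i j
      = transpEndo n i j * transpEndo n j (j+1) := by
    refine transp_mul_congr n hii hsj hii hsj1 hsj hsj1 hii hsj ?_
    ext x
    simp only [Equiv.Perm.mul_apply, Equiv.swap_apply_def]
    split_ifs <;> omega
  have hmain : ∀ k ∈ (Finset.Icc 1 (j-1)).erase i,
      transpEndo n k (j+1) * transpEndo n i j = transpEndo n i j * transpEndo n k (j+1) := by
    intro k hk
    have hki : k ≠ i := (Finset.mem_erase.mp hk).1
    have hkm : k ∈ Finset.Icc 1 (j-1) := (Finset.mem_erase.mp hk).2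
    have hkk := memi hkm hjn
    have hklt : k < j := by simp only [Finset.mem_Icc] at hkm; omega
    refine transp_mul_congr n hii hsj hkk hsj1 hkk hsj1 hii hsj ?_
    ext x
    simp only [Equiv.Perm.mul_apply, Equiv.swap_apply_def]
    split_ifs <;> omega
  rw [Finset.sum_congr rfl hmain, hc1, hc2]
  abel

end rel


/-- with D = M_j − M_{j+1} invertible and τ_j = s_j + D⁻¹ we have
τ_j M_j = M_{j+1} τ_j, M_j τ_j = τ_j M_{j+1}, and τ_j² = 1 − D⁻² (as endomorphisms of the
2^n-dimensional space of functions on C_2^n). -/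
theorem tau_relations (n j : ℕ) (hn : 2 ≤ n) (hj1 : 1 ≤ j) (hj : j ≤ n - 1)
    (Dinv : Module.End ℝ ((↥((Finset.Icc 1 n).powerset)) → ℝ))
    (hD1 : (murphyEndo n j - murphyEndo n (j + 1)) * Dinv = 1)
    (hD2 : Dinv * (murphyEndo n j - murphyEndo n (j + 1)) = 1) :
    (transpEndo n j (j + 1) + Dinv) * murphyEndo n j =
        murphyEndo n (j + 1) * (transpEndo n j (j + 1) + Dinv) ∧
    murphyEndo n j * (transpEndo n j (j + 1) + Dinv) =
        (transpEndo n j (j + 1) + Dinv) * murphyEndo n (j + 1) ∧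
    (transpEndo n j (j + 1) + Dinv) * (transpEndo n j (j + 1) + Dinv) =
        1 - Dinv * Dinv := by
  have hjn : j + 1 ≤ n := by omega
  set S := transpEndo n j (j + 1) with hS
  set A := murphyEndo n j with hA
  set B := murphyEndo n (j + 1) with hB
  set D := A - B with hD
  have h1 : S * A + 1 = B * S := rel_sA hj1 hjn
  have h2 : S * B = A * S + 1 := rel_sB hj1 hjn
  have h3 : S * S = 1 := transp_mul_self n (memj hj1 hjn) (memj1 hjn)
  have h4 : A * B = B * A := rel_comm hj1 hjn
  have hAD : A * D = D * A := by rw [hD, mul_sub, sub_mul, h4]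
  have hBD : B * D = D * B := by rw [hD, mul_sub, sub_mul, h4]
  have hADinv : Dinv * A = A * Dinv := by
    calc Dinv * A = Dinv * (A * D) * Dinv := by
          rw [mul_assoc Dinv (A * D) Dinv, mul_assoc A D Dinv, hD1, mul_one]
      _ = Dinv * (D * A) * Dinv := by rw [hAD]
      _ = A * Dinv := by rw [← mul_assoc Dinv D, hD2, one_mul]
  have hBDinv : Dinv * B = B * Dinv := by
    calc Dinv * B = Dinv * (B * D) * Dinv := by
          rw [mul_assoc Dinv (B * D) Dinv, mul_assoc B D Dinv, hD1, mul_one]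
      _ = Dinv * (D * B) * Dinv := by rw [hBD]
      _ = B * Dinv := by rw [← mul_assoc Dinv D, hD2, one_mul]
  have key : A * Dinv = 1 + B * Dinv := by
    have h : A * Dinv - B * Dinv = 1 := by rw [← sub_mul, ← hD, hD1]
    rw [sub_eq_iff_eq_add] at h
    rw [h, add_comm]
  refine ⟨?_, ?_, ?_⟩
  · rw [add_mul, mul_add, ← h1, hADinv, key]; abel
  · rw [mul_add, add_mul, h2, hBDinv, key]; abel
  · have h1' : S * A = B * S - 1 := by rw [← h1]; abel
    have hSDsum : S * D + D * S + (1 + 1) = 0 := by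
      rw [hD, mul_sub, sub_mul, h1', h2]; abel
    have f1 : Dinv * (S * D) * Dinv = Dinv * S := by
      rw [mul_assoc Dinv (S * D) Dinv, mul_assoc S D Dinv, hD1, mul_one]
    have f2 : Dinv * (D * S) * Dinv = S * Dinv := by
      rw [← mul_assoc Dinv D S, hD2, one_mul]
    have e1 : Dinv * (S * D + D * S + (1 + 1)) * Dinv = 0 := by
      rw [hSDsum, mul_zero, zero_mul]
    have hk0 : Dinv * S + S * Dinv + (Dinv * Dinv + Dinv * Dinv) = 0 := by
      rw [← e1]
      simp only [mul_add, add_mul, mul_one, f1, f2]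
    have expand : (S + Dinv) * (S + Dinv) = S * S + (S * Dinv + Dinv * S) + Dinv * Dinv := by
      noncomm_ring
    rw [expand, h3, ← sub_eq_zero, ← hk0]
    abel
end

section
/- For every n ≥ 2, all x, y ∈ C_2^{n−1}, and every a ∈ {0,1}: K_n(xa, y0) + K_n(xa, y1) = K_{n−1}(x, y), where xa denotes the binary n-tuple obtained from x by appending a as the n-th coordinate. Equivalently, as 2^n × 2^n matrices, K_n · (I^{⊗(n−1)} ⊗ K_1) = K_{n−1} ⊗ K_1, where I is the 2×2 identity matrix and K_1 is the 2×2 matrix all of whose entries are 1/2. -/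
open Finset

attribute [local instance] Classical.propDecidable

/-! Writing `w = blockWeight`, the kernel factors as `K_n(x, y) = 4⁻ⁿ w(n₀₀, n₀₁) w(n₁₀, n₁₁)`.
Appending a coordinate `(a, b)` raises `n_{ab}` by one, so lumping over `b` comes down to
`w(a+1, b) + w(a, b+1) = 4 w(a, b)`. Both summands are rational multiples of `w(a, b)`, by
`(a+1) C(2a+2, a+1) = 2(2a+1) C(2a, a)` and `(a+b+1) C(a+b, a) = (a+1) C(a+b+1, a+1)`, and the
multipliers `2(2a+1)` and `2(2b+1)` over `a+b+1` add up to `4`. -/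

noncomputable def blockWeight (a b : ℕ) : ℝ :=
  (a.centralBinom * b.centralBinom : ℝ) / (a + b).choose a

lemma blockWeight_comm (a b : ℕ) : blockWeight a b = blockWeight b a := by
  rw [blockWeight, blockWeight, mul_comm, add_comm, Nat.choose_symm_add]

lemma blockWeight_succ_left (a b : ℕ) :
    blockWeight (a + 1) b = 2 * (2 * a + 1) / (a + b + 1) * blockWeight a b := by
  have hcentral : ((a + 1 : ℕ) : ℝ) * (a + 1).centralBinom = 2 * (2 * a + 1) * a.centralBinom := by
    exact_mod_cast Nat.succ_mul_centralBinom_succ a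
  have hchoose : ((a + b + 1 : ℕ) : ℝ) * (a + b).choose a = (a + b + 1).choose (a + 1) * (a + 1) := by
    exact_mod_cast Nat.add_one_mul_choose_eq (a + b) a
  have hpos : (0 : ℝ) < (a + b).choose a := by exact_mod_cast Nat.choose_pos (by omega)
  have hpos' : (0 : ℝ) < (a + b + 1).choose (a + 1) := by exact_mod_cast Nat.choose_pos (by omega)
  push_cast at hcentral hchoose
  rw [blockWeight, blockWeight, Nat.add_right_comm, div_eq_iff hpos'.ne', div_mul_div_comm,
    div_mul_eq_mul_div, eq_div_iff (by positivity), hchoose]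
  linear_combination (b.centralBinom * (a + b + 1).choose (a + 1) : ℝ) * hcentral

lemma blockWeight_succ_left_add_succ_right (a b : ℕ) :
    blockWeight (a + 1) b + blockWeight a (b + 1) = 4 * blockWeight a b := by
  rw [blockWeight_succ_left, blockWeight_comm a (b + 1), blockWeight_succ_left,
    blockWeight_comm b a]
  field_simp
  ring

lemma Kmat_eq_blockWeight (n : ℕ) (x y : Finset ℕ) :
    Kmat n x y = blockWeight (n - #(x ∪ y)) #(y \ x) * blockWeight #(x \ y) #(x ∩ y) / 4 ^ n := by
  simp only [Kmat, blockWeight, Nat.centralBinom]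
  ring

section FreshCoordinate

variable {m k : ℕ} {x y : Finset ℕ}

lemma Kmat_add_Kmat_insert_right (hkx : k ∉ x) (hky : k ∉ y) (hcard : #(x ∪ y) ≤ m) :
    Kmat (m + 1) x y + Kmat (m + 1) x (insert k y) = Kmat m x y := by
  have hsub : m + 1 - #(x ∪ y) = m - #(x ∪ y) + 1 := by omega
  rw [Kmat_eq_blockWeight, Kmat_eq_blockWeight, Kmat_eq_blockWeight, union_insert,
    insert_sdiff_of_notMem _ hkx, sdiff_insert_of_notMem hkx, inter_insert_of_notMem hkx,
    card_insert_of_notMem (by simp [hkx, hky]), card_insert_of_notMem (by simp [hky]),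
    Nat.sub_add_eq, hsub, Nat.add_sub_cancel, ← add_div, ← add_mul,
    blockWeight_succ_left_add_succ_right, pow_succ]
  ring

lemma Kmat_insert_add_Kmat_insert_insert (hkx : k ∉ x) (hky : k ∉ y) (hcard : #(x ∪ y) ≤ m) :
    Kmat (m + 1) (insert k x) y + Kmat (m + 1) (insert k x) (insert k y) = Kmat m x y := by
  have hsub : m + 1 - #(x ∪ y) = m - #(x ∪ y) + 1 := by omega
  rw [Kmat_eq_blockWeight, Kmat_eq_blockWeight, Kmat_eq_blockWeight, union_insert, insert_union,
    insert_idem, insert_sdiff_of_notMem _ hky, sdiff_insert_of_notMem hky,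
    insert_inter_of_notMem hky, insert_sdiff_insert, insert_sdiff_insert,
    sdiff_insert_of_notMem hky, sdiff_insert_of_notMem hkx, ← insert_inter_distrib,
    card_insert_of_notMem (by simp [hkx, hky]), card_insert_of_notMem (by simp [hkx]),
    card_insert_of_notMem (by simp [hkx]), Nat.sub_add_eq, hsub, Nat.add_sub_cancel,
    ← add_div, ← mul_add, blockWeight_succ_left_add_succ_right, pow_succ]
  ring

end FreshCoordinate

/-- lumping over the final coordinate:
K_n(xa, y0) + K_n(xa, y1) = K_{n−1}(x, y) for a ∈ {0,1}. -/
theorem Kmat_lump_last_coordinate (n : ℕ) (hn : 2 ≤ n) (x y : Finset ℕ)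
    (hx : x ⊆ Finset.Icc 1 (n - 1)) (hy : y ⊆ Finset.Icc 1 (n - 1)) :
    (Kmat n x y + Kmat n x (insert n y) = Kmat (n - 1) x y) ∧
    (Kmat n (insert n x) y + Kmat n (insert n x) (insert n y) = Kmat (n - 1) x y) := by
  obtain ⟨m, rfl⟩ : ∃ m, n = m + 1 := ⟨n - 1, by omega⟩
  rw [Nat.add_sub_cancel] at hx hy ⊢
  have hnx : m + 1 ∉ x := fun h => by simpa using hx h
  have hny : m + 1 ∉ y := fun h => by simpa using hy h
  have hcard : #(x ∪ y) ≤ m := by simpa using card_le_card (union_subset hx hy)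
  exact ⟨Kmat_add_Kmat_insert_right hnx hny hcard, Kmat_insert_add_Kmat_insert_insert hnx hny hcard⟩
end

section
/- For every n ≥ 4, every 2 ≤ m ≤ ⌊n/2⌋, every standard Young tableau Q of shape (n−m,m), every 0 ≤ ℓ ≤ n−2m, and every 1 ≤ j ≤ n: f_Q^{m,ℓ}({j}) = 0, where {j} denotes the binary n-tuple with a single 1 in coordinate j. -/
open Finset

attribute [local instance] Classical.propDecidable

/-- Vanishing on all sets of cardinality 1. -/
def VanishOne (f : Finset ℕ → ℝ) : Prop := ∀ U : Finset ℕ, U.card = 1 → f U = 0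

lemma vanishOne_sOp (t : ℕ) (f : Finset ℕ → ℝ) (h : VanishOne f) : VanishOne (sOp t f) := by
  intro U hU
  unfold sOp
  exact h _ (by rw [Finset.card_image_of_injective _ (Equiv.swap t (t + 1)).injective]; exact hU)

lemma vanishOne_tauFactor (r t : ℕ) (f : Finset ℕ → ℝ) (h : VanishOne f) :
    VanishOne (tauFactor r t f) := by
  intro U hU
  unfold tauFactor
  rw [vanishOne_sOp t f h U hU, h U hU]
  ring

lemma vanishOne_tauComp (r k : ℕ) (f : Finset ℕ → ℝ) (h : VanishOne f) :
    VanishOne (tauComp r k f) := by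
  induction k with
  | zero => exact h
  | succ k ih => exact vanishOne_tauFactor _ _ _ ih

lemma vanishOne_tauQAux (Q : List ℕ) (r : ℕ) (f : Finset ℕ → ℝ) (h : VanishOne f) :
    VanishOne (tauQAux r Q f) := by
  induction Q generalizing r f with
  | nil => exact h
  | cons a rest ih => exact vanishOne_tauComp _ _ _ (ih _ _ h)

lemma vanishOne_gT (n m i : ℕ) (hm : 2 ≤ m) : VanishOne (gT n m i) := by
  intro U hU
  unfold gT
  split
  · next hcond =>
    exfalso
    obtain ⟨x, hx⟩ := Finset.card_eq_one.mp hU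
    have h1 := hcond.1 1 (Finset.mem_Icc.mpr ⟨le_refl 1, le_trans one_le_two hm⟩)
    have h2 := hcond.1 2 (Finset.mem_Icc.mpr ⟨one_le_two, hm⟩)
    norm_num at h1 h2
    subst hx
    simp only [Finset.mem_singleton] at h1 h2
    omega
  · rfl

lemma vanishOne_fT (n m ℓ : ℕ) (hm : 2 ≤ m) : VanishOne (fT n m ℓ) := by
  intro U hU
  unfold fT
  refine Finset.sum_eq_zero fun i _ => ?_
  rw [vanishOne_gT n m i hm U hU, mul_zero]

/-- for m ≥ 2, every f_Q^{m,ℓ} vanishes at every singleton state {j}. -/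
theorem fQ_vanishes_at_singleton (n m ℓ j : ℕ) (Q : List ℕ) (hn : 4 ≤ n) (hm2 : 2 ≤ m)
    (hm : 2 * m ≤ n) (hQm : Q.length = m) (hQ : IsSYT n Q) (hℓ : ℓ ≤ n - 2 * m)
    (hj1 : 1 ≤ j) (hjn : j ≤ n) :
    fQvec n Q ℓ {j} = 0 := by
  exact vanishOne_tauQAux Q 1 _ (vanishOne_fT n Q.length ℓ (hQm ▸ hm2)) {j}
    (Finset.card_singleton j)
end

section
/- Let n ≥ 3 and 0 ≤ ℓ ≤ n−2, and let Q be a standard Young tableau of shape (n−1,1) with single second-row entry a₁ (2 ≤ a₁ ≤ n). Then f_Q^{1,ℓ}({n}) = −(2+ℓ)·C(n−2,ℓ) if a₁ = n, and f_Q^{1,ℓ}({n}) = 0 if a₁ < n, where {n} denotes the binary n-tuple with a single 1 in the last coordinate. -/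
open Finset

attribute [local instance] Classical.propDecidable

lemma fT_singleton_zero (n ℓ j : ℕ) (hj : 3 ≤ j) : fT n 1 ℓ {j} = 0 := by
  unfold fT
  apply Finset.sum_eq_zero
  intro i _
  suffices h : gT n 1 i {j} = 0 by rw [h]; ring
  unfold gT
  rw [if_neg]
  rintro ⟨h1, -⟩
  have := h1 1 (by simp)
  simp only [Finset.mem_singleton] at this
  omega

lemma fT_two (n ℓ : ℕ) : fT n 1 ℓ {2} = Tcoef n 1 ℓ 0 := by
  unfold fT
  rw [Finset.sum_eq_single 0]
  · suffices h : gT n 1 0 {2} = 1 by rw [h]; ring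
    unfold gT
    rw [if_pos]
    · have h2 : ({2} : Finset ℕ) ∩ (Finset.range 1).image (fun r => 2 * r + 1) = ∅ := by
        ext x; simp; try omega
      rw [h2]; simp
    · constructor
      · intro r hr
        simp only [Finset.mem_Icc] at hr
        have : r = 1 := by omega
        subst this
        simp
      · have : ({2} : Finset ℕ) ∩ Finset.Icc (2 * 1 + 1) n = ∅ := by
          ext x; simp; try omega
        rw [this]; simp
  · intro i _ hi
    suffices h : gT n 1 i {2} = 0 by rw [h]; ring
    unfold gT
    rw [if_neg]
    rintro ⟨-, h2⟩
    apply hi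
    have : ({2} : Finset ℕ) ∩ Finset.Icc (2 * 1 + 1) n = ∅ := by
      ext x; simp; try omega
    rw [this] at h2
    simpa using h2.symm
  · intro h
    exact absurd (Finset.mem_range.mpr (by omega)) h

lemma tauComp_eval (n ℓ : ℕ) (k : ℕ) (hk : k + 2 ≤ n) :
    (∀ j, k + 3 ≤ j → tauComp 1 k (fT n 1 ℓ) {j} = 0) ∧
      tauComp 1 k (fT n 1 ℓ) {k + 2} = Tcoef n 1 ℓ 0 := by
  induction k with
  | zero =>
      refine ⟨fun j hj => fT_singleton_zero n ℓ j hj, fT_two n ℓ⟩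
  | succ k ih =>
      obtain ⟨ih1, ih2⟩ := ih (by omega)
      have swap_fix : ∀ j, k + 4 ≤ j →
          ({j} : Finset ℕ).image (Equiv.swap (2 * 1 + k) (2 * 1 + k + 1)) = {j} := by
        intro j hj
        rw [Finset.image_singleton, Equiv.swap_apply_of_ne_of_ne (by omega) (by omega)]
      constructor
      · intro j hj
        show tauFactor 1 (2 * 1 + k) (tauComp 1 k (fT n 1 ℓ)) {j} = 0
        unfold tauFactor sOp
        rw [swap_fix j (by omega), ih1 j (by omega)]
        ring
      · show tauFactor 1 (2 * 1 + k) (tauComp 1 k (fT n 1 ℓ)) {k + 1 + 2} = _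
        unfold tauFactor sOp
        have himg : ({k + 1 + 2} : Finset ℕ).image
            (Equiv.swap (2 * 1 + k) (2 * 1 + k + 1)) = {k + 2} := by
          rw [Finset.image_singleton]
          have : k + 1 + 2 = 2 * 1 + k + 1 := by omega
          rw [this, Equiv.swap_apply_right]
          congr 1
          omega
        rw [himg, ih2, ih1 (k + 1 + 2) (by omega)]
        ring

lemma Tcoef_zero (n ℓ : ℕ) :
    Tcoef n 1 ℓ 0 = -((2 + ℓ : ℝ)) * ((n - 2).choose ℓ) := by
  unfold Tcoef
  rw [Finset.sum_range_one, if_pos (Nat.zero_le ℓ)]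
  have h1 : (2 * 1 + ℓ).choose (1 + 0) = 2 + ℓ := by
    rw [Nat.choose_one_right]
  have h2 : n - 2 * 1 - 0 = n - 2 := by omega
  rw [h1, h2]
  simp only [Nat.choose_self, Nat.sub_zero]
  push_cast
  ring

/-- for a tableau Q of shape (n−1,1) with second-row entry a,
f_Q^{1,ℓ}({n}) = −(2+ℓ)·C(n−2,ℓ) if a = n and 0 otherwise. -/
theorem fQ_shape_n1_at_last (n ℓ a : ℕ) (hn : 3 ≤ n) (hℓ : ℓ ≤ n - 2)
    (ha2 : 2 ≤ a) (han : a ≤ n) :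
    fQvec n [a] ℓ {n} =
      if a = n then -((2 + ℓ : ℝ)) * ((n - 2).choose ℓ) else 0 := by
  have hfQ : fQvec n [a] ℓ = tauComp 1 (a - 2) (fT n 1 ℓ) := rfl
  rw [hfQ]
  split_ifs with h
  · subst h
    obtain ⟨b, rfl⟩ : ∃ b, a = b + 3 := ⟨a - 3, by omega⟩
    have hk : b + 3 - 2 = b + 1 := by omega
    rw [hk]
    show tauFactor 1 (2 * 1 + b) (tauComp 1 b (fT (b + 3) 1 ℓ)) {b + 3} = _
    obtain ⟨ih1, ih2⟩ := tauComp_eval (b + 3) ℓ b (by omega)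
    unfold tauFactor sOp
    have himg : ({b + 3} : Finset ℕ).image
        (Equiv.swap (2 * 1 + b) (2 * 1 + b + 1)) = {b + 2} := by
      rw [Finset.image_singleton]
      have h3 : b + 3 = 2 * 1 + b + 1 := by omega
      rw [h3, Equiv.swap_apply_right]
      congr 1
      omega
    rw [himg, ih2, ih1 (b + 3) (by omega), Tcoef_zero, hk]
    ring
  · obtain ⟨ih1, -⟩ := tauComp_eval n ℓ (a - 2) (by omega)
    exact ih1 n (by omega)
end

section
/- For all integers n, m, ℓ, i with 0 ≤ m ≤ ⌊n/2⌋ and 0 ≤ ℓ, i ≤ n−2m, the following identity of rational numbers holds: Σ_{k=0}^{ℓ} [(−ℓ)_k · (ℓ+2m+1)_k · (−i)_k] / [k! · (m+1)_k · (−(n−2m))_k] = (−1)^m · T_{m,n}^{(ℓ)}(i) / (C(n−2m,ℓ) · C(2m+ℓ,m)). (The left-hand side is the value at i of the (m,m)-Hahn polynomial of degree ℓ on {0,…,n−2m}.) -/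
/-!
Writing rising factorials at negative and positive integers as factorials times binomial
coefficients, the `k`-th term of the Hahn sum times `C(N, ℓ) C(2m + ℓ, m)` (with `N = n - 2m`)
becomes `(-1)^k C(i, k) C(2m + ℓ + k, m + k) C(N - k, ℓ - k)`. Expanding
`C(2m + ℓ + k, m + k) = ∑_j C(k, j) C(2m + ℓ, m + j)` (Vandermonde) and exchanging the sums, the
inner sum over `k` collapses, by the alternating identity
`∑_t (-1)^t C(a, t) C(b - t, c - t) = C(b - a, c)`, to `(-1)^j C(i, j) C(N - i, ℓ - j)`: the
`j`-th term of `(-1)^m T`.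
-/

open Finset

attribute [local instance] Classical.propDecidable

/-- The rising factorial (a)_k over ℚ. -/
def risingFac (a : ℚ) (k : ℕ) : ℚ := ∏ j ∈ Finset.range k, (a + j)

/-- The scalars T_{m,n}^{(ℓ)}(i), as rational numbers. -/
def TcoefQ (n m ℓ i : ℕ) : ℚ :=
  ∑ j ∈ Finset.range (i + 1),
    if j ≤ ℓ then
      (-1 : ℚ) ^ (m + j) * ((2 * m + ℓ).choose (m + j)) * (i.choose j) *
        ((n - 2 * m - i).choose (ℓ - j))
    else 0

open scoped Nat

lemma risingFac_eq_eval_ascPochhammer (a : ℚ) (k : ℕ) :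
    risingFac a k = (ascPochhammer ℚ k).eval a := by
  induction k with
  | zero => simp [risingFac]
  | succ k ih => rw [risingFac, prod_range_succ, ← risingFac, ih, ascPochhammer_succ_eval]

lemma risingFac_neg_natCast (x k : ℕ) : risingFac (-x) k = (-1) ^ k * k ! * x.choose k := by
  rw [risingFac_eq_eval_ascPochhammer, ascPochhammer_eval_neg_eq_descPochhammer,
    descPochhammer_eval_eq_descFactorial, Nat.descFactorial_eq_factorial_mul_choose]
  push_cast
  ring

lemma risingFac_natCast_add_one (c k : ℕ) : risingFac (c + 1) k = k ! * (c + k).choose k := by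
  rw [risingFac_eq_eval_ascPochhammer, ← Nat.cast_succ, ← Nat.cast_ascFactorial,
    Nat.ascFactorial_eq_factorial_mul_choose]
  push_cast
  rfl

lemma add_choose_add_eq_sum (a α k : ℕ) :
    (a + k).choose (α + k) = ∑ j ∈ range (k + 1), k.choose j * a.choose (α + j) := by
  rw [add_comm a, Nat.add_choose_eq,
    Nat.sum_antidiagonal_eq_sum_range_succ (fun p q => k.choose p * a.choose q)]
  rw [← sum_subset (range_subset_range.2 (by omega : k + 1 ≤ (α + k).succ)) fun p _ hp => by
    rw [Nat.choose_eq_zero_of_lt (by simp only [mem_range] at hp; omega), zero_mul]]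
  rw [← sum_range_reflect]
  refine sum_congr rfl fun j hj => ?_
  have hj : j ≤ k := Nat.lt_succ_iff.1 (mem_range.1 hj)
  rw [Nat.add_sub_cancel, Nat.choose_symm hj, show α + k - (k - j) = α + j by omega]

lemma sum_neg_one_pow_mul_choose_mul_choose_sub {a b : ℕ} (c : ℕ) (hab : a ≤ b) :
    ∑ t ∈ range (c + 1), (-1 : ℤ) ^ t * a.choose t * (b - t).choose (c - t) =
      (b - a).choose c := by
  induction a generalizing b c with
  | zero =>
    rw [sum_eq_single 0 (fun t _ ht => by simp [Nat.choose_eq_zero_of_lt (Nat.pos_of_ne_zero ht)])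
      (by simp)]
    simp
  | succ a ih =>
    rcases c with _ | c
    · simp
    have hpascal : ∀ t ∈ range (c + 1),
        (-1 : ℤ) ^ (t + 1) * (a + 1).choose (t + 1) * (b - (t + 1)).choose (c + 1 - (t + 1)) =
          (-1) ^ (t + 1) * a.choose (t + 1) * (b - (t + 1)).choose (c + 1 - (t + 1)) -
            (-1) ^ t * a.choose t * (b - 1 - t).choose (c - t) := by
      intro t _
      rw [Nat.choose_succ_succ', show b - (t + 1) = b - 1 - t by omega,
        show c + 1 - (t + 1) = c - t by omega]
      push_cast
      ring
    calc ∑ t ∈ range (c + 1 + 1), (-1 : ℤ) ^ t * (a + 1).choose t * (b - t).choose (c + 1 - t)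
        = ∑ t ∈ range (c + 1 + 1), (-1 : ℤ) ^ t * a.choose t * (b - t).choose (c + 1 - t) -
            ∑ t ∈ range (c + 1), (-1 : ℤ) ^ t * a.choose t * (b - 1 - t).choose (c - t) := by
          rw [sum_range_succ', sum_range_succ' _ (c + 1), sum_congr rfl hpascal, sum_sub_distrib]
          simp only [pow_zero, Nat.choose_zero_right]
          ring
      _ = (b - a).choose (c + 1) - (b - 1 - a).choose c := by
          rw [ih (c + 1) (by omega), ih c (by omega : a ≤ b - 1)]
      _ = (b - (a + 1)).choose (c + 1) := by
          rw [show b - a = b - (a + 1) + 1 by omega, Nat.choose_succ_succ',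
            show b - 1 - a = b - (a + 1) by omega]
          push_cast
          ring

lemma sum_Ico_neg_one_pow_mul_choose_mul_choose_mul_choose {i j ℓ N : ℕ} (hj : j ≤ ℓ)
    (hi : i ≤ N) :
    ∑ k ∈ Ico j (ℓ + 1), (-1 : ℤ) ^ k * i.choose k * k.choose j * (N - k).choose (ℓ - k) =
      (-1) ^ j * i.choose j * (N - i).choose (ℓ - j) := by
  rw [sum_Ico_eq_sum_range, show ℓ + 1 - j = ℓ - j + 1 by omega]
  have hterm : ∀ t ∈ range (ℓ - j + 1),
      (-1 : ℤ) ^ (j + t) * i.choose (j + t) * (j + t).choose j * (N - (j + t)).choose (ℓ - (j + t))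
        = (-1) ^ j * i.choose j *
          ((-1) ^ t * (i - j).choose t * (N - j - t).choose (ℓ - j - t)) := by
    intro t _
    have htri := Nat.choose_mul (n := i) (Nat.le_add_right j t)
    rw [Nat.add_sub_cancel_left] at htri
    rw [show N - (j + t) = N - j - t by omega, show ℓ - (j + t) = ℓ - j - t by omega, pow_add,
      mul_assoc _ (i.choose (j + t) : ℤ), ← Nat.cast_mul, htri]
    push_cast
    ring
  rw [sum_congr rfl hterm, ← mul_sum,
    sum_neg_one_pow_mul_choose_mul_choose_sub (ℓ - j) (by omega : i - j ≤ N - j)]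
  rcases le_or_gt j i with hji | hji
  · rw [show N - j - (i - j) = N - i by omega]
  · simp [Nat.choose_eq_zero_of_lt hji]

lemma sum_neg_one_pow_mul_choose_mul_add_choose_add (a α i ℓ N : ℕ) (hi : i ≤ N) :
    ∑ k ∈ range (ℓ + 1),
        (-1 : ℤ) ^ k * i.choose k * (a + k).choose (α + k) * (N - k).choose (ℓ - k) =
      ∑ j ∈ range (ℓ + 1),
        (-1 : ℤ) ^ j * a.choose (α + j) * i.choose j * (N - i).choose (ℓ - j) := by
  simp_rw [add_choose_add_eq_sum, Nat.cast_sum, mul_sum, sum_mul, range_eq_Ico]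
  rw [← sum_Ico_Ico_comm]
  refine sum_congr rfl fun j hj => ?_
  calc _ = (∑ k ∈ Ico j (ℓ + 1),
          (-1 : ℤ) ^ k * i.choose k * k.choose j * (N - k).choose (ℓ - k)) * a.choose (α + j) := by
        rw [sum_mul]
        exact sum_congr rfl fun k _ => by push_cast; ring
    _ = _ := by
        rw [sum_Ico_neg_one_pow_mul_choose_mul_choose_mul_choose
          (Nat.lt_succ_iff.1 (mem_Ico.1 hj).2) hi]
        ring

/-- The Hahn polynomial `Q_ℓ(x; α, β, N) = ₃F₂(-ℓ, ℓ + α + β + 1, -x; α + 1, -N; 1)`. -/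
def hahnQ (α β N ℓ : ℕ) (x : ℚ) : ℚ :=
  ∑ k ∈ range (ℓ + 1),
    risingFac (-(ℓ : ℚ)) k * risingFac ((ℓ : ℚ) + α + β + 1) k * risingFac (-x) k /
      ((k ! : ℚ) * risingFac ((α : ℚ) + 1) k * risingFac (-(N : ℚ)) k)

lemma hahn_term_mul_choose_mul_choose {a α i ℓ N k : ℕ} (hk : k ≤ ℓ) (hℓ : ℓ ≤ N) :
    risingFac (-(ℓ : ℚ)) k * risingFac ((a : ℚ) + 1) k * risingFac (-(i : ℚ)) k /
        ((k ! : ℚ) * risingFac ((α : ℚ) + 1) k * risingFac (-(N : ℚ)) k) *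
        (N.choose ℓ * a.choose α) =
      (-1) ^ k * i.choose k * (a + k).choose (α + k) * (N - k).choose (ℓ - k) := by
  have hN : (N.choose ℓ * ℓ.choose k : ℚ) = N.choose k * (N - k).choose (ℓ - k) := by
    exact_mod_cast Nat.choose_mul hk
  have ha : ((a + k).choose (α + k) * (α + k).choose k : ℚ) = (a + k).choose k * a.choose α := by
    have := Nat.choose_mul (n := a + k) (Nat.le_add_left k α)
    rw [Nat.add_sub_cancel, Nat.add_sub_cancel] at this
    exact_mod_cast this
  have hαk : ((α + k).choose k : ℚ) ≠ 0 := by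
    exact_mod_cast (Nat.choose_pos (Nat.le_add_left k α)).ne'
  have hNk : (N.choose k : ℚ) ≠ 0 := by exact_mod_cast (Nat.choose_pos (hk.trans hℓ)).ne'
  simp only [risingFac_neg_natCast, risingFac_natCast_add_one]
  field_simp
  linear_combination (i.choose k : ℚ) *
    ((a + k).choose k * a.choose α * hN - N.choose k * (N - k).choose (ℓ - k) * ha)

lemma hahnQ_mul_choose_mul_choose (α β N ℓ i : ℕ) (hℓ : ℓ ≤ N) (hi : i ≤ N) :
    hahnQ α β N ℓ i * (N.choose ℓ * (α + β + ℓ).choose α) =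
      ∑ j ∈ range (ℓ + 1),
        (-1) ^ j * ((α + β + ℓ).choose (α + j) : ℚ) * i.choose j * (N - i).choose (ℓ - j) := by
  have hcast : (ℓ : ℚ) + α + β + 1 = ((α + β + ℓ : ℕ) : ℚ) + 1 := by push_cast; ring
  rw [hahnQ, hcast, sum_mul]
  rw [sum_congr rfl fun k hk =>
    hahn_term_mul_choose_mul_choose (Nat.lt_succ_iff.1 (mem_range.1 hk)) hℓ]
  exact_mod_cast sum_neg_one_pow_mul_choose_mul_add_choose_add (α + β + ℓ) α i ℓ N hi

lemma TcoefQ_eq_neg_one_pow_mul (n m ℓ i : ℕ) :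
    TcoefQ n m ℓ i = (-1) ^ m *
      ∑ j ∈ range (ℓ + 1),
        (-1) ^ j * ((2 * m + ℓ).choose (m + j) : ℚ) * i.choose j *
          (n - 2 * m - i).choose (ℓ - j) := by
  rw [TcoefQ, ← sum_filter, mul_sum]
  refine sum_subset (fun j hj => ?_) (fun j hj hj' => ?_) |>.trans (sum_congr rfl fun j _ => ?_)
  · simp only [mem_filter, mem_range] at hj ⊢
    omega
  · have hij : i < j := by simp only [mem_filter, mem_range] at hj hj'; omega
    simp [Nat.choose_eq_zero_of_lt hij]
  · rw [pow_add]
    ring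

theorem hahn_eq_Tcoef_general (n m ℓ i : ℕ) (hℓ : ℓ ≤ n - 2 * m)
    (hi : i ≤ n - 2 * m) :
    (∑ k ∈ Finset.range (ℓ + 1),
        risingFac (-(ℓ : ℚ)) k * risingFac ((ℓ : ℚ) + 2 * m + 1) k *
            risingFac (-(i : ℚ)) k /
          ((k.factorial : ℚ) * risingFac ((m : ℚ) + 1) k *
            risingFac (-((n - 2 * m : ℕ) : ℚ)) k)) =
      (-1 : ℚ) ^ m * TcoefQ n m ℓ i /
        (((n - 2 * m).choose ℓ : ℚ) * ((2 * m + ℓ).choose m)) := by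
  have hhahn := hahnQ_mul_choose_mul_choose m m (n - 2 * m) ℓ i hℓ hi
  rw [← two_mul, hahnQ, show (ℓ : ℚ) + m + m + 1 = ℓ + 2 * m + 1 by ring] at hhahn
  have hD : ((n - 2 * m).choose ℓ * (2 * m + ℓ).choose m : ℚ) ≠ 0 := by
    have := Nat.choose_pos hℓ
    have := Nat.choose_pos (by omega : m ≤ 2 * m + ℓ)
    positivity
  rw [eq_div_iff hD, hhahn, TcoefQ_eq_neg_one_pow_mul, ← mul_assoc, ← mul_pow]
  simp

/-- the (m,m)-Hahn polynomial of degree ℓ on {0,…,n−2m}, evaluated at i,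
equals (−1)^m T_{m,n}^{(ℓ)}(i) / (C(n−2m,ℓ)·C(2m+ℓ,m)). -/
theorem hahn_eq_Tcoef (n m ℓ i : ℕ) (hm : 2 * m ≤ n) (hℓ : ℓ ≤ n - 2 * m)
    (hi : i ≤ n - 2 * m) :
    (∑ k ∈ Finset.range (ℓ + 1),
        risingFac (-(ℓ : ℚ)) k * risingFac ((ℓ : ℚ) + 2 * m + 1) k *
            risingFac (-(i : ℚ)) k /
          ((k.factorial : ℚ) * risingFac ((m : ℚ) + 1) k *
            risingFac (-((n - 2 * m : ℕ) : ℚ)) k)) =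
      (-1 : ℚ) ^ m * TcoefQ n m ℓ i /
        (((n - 2 * m).choose ℓ : ℚ) * ((2 * m + ℓ).choose m)) :=
  hahn_eq_Tcoef_general n m ℓ i hℓ hi
end
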